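/- arXiv:0902.4199 — 3 statements merged into one kernel-verified Lean document; each statement's English description precedes it below -/
import Mathlib

section
/- Let p: Y → X be a continuous map between locally compact Hausdorff spaces, B a u.s.c. field of Banach algebras over X, and E, F Banach B-pairs. If T ∈ K^loc_B(E,F) then p*T ∈ K^loc_{p*B}(p*E, p*F). Conversely, every T̃ ∈ K^loc_{p*B}(p*E, p*F) can be locally approximated by pullbacks of locally compact operators: for every y ∈ Y and ε > 0 there are a neighbourhood V of y and T ∈ K^loc_B(E,F) with ‖T̃_v − (p*T)_v‖ ≤ ε for all v ∈ V. -/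
/-! ## Upper semi-continuous fields of Banach spaces, Banach algebras and Banach pairs -/

universe u v w x y z

/-- An upper semi-continuous field of Banach spaces over `X`: a family of (complex) Banach
spaces `(E x)_{x ∈ X}` together with a space of sections `Γ` satisfying Lafforgue's
conditions (C1)–(C4). -/
structure USCField (X : Type u) [TopologicalSpace X] (E : X → Type v)
    [∀ x, NormedAddCommGroup (E x)] [∀ x, NormedSpace ℂ (E x)]
    [∀ x, CompleteSpace (E x)] : Type (max u v) where
  Γ : Set (∀ x, E x)
  /-- (C1) `Γ` is a linear subspace (zero) -/
  zero_mem : (fun x => (0 : E x)) ∈ Γ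
  /-- (C1) `Γ` is a linear subspace (addition) -/
  add_mem : ∀ {ξ η}, ξ ∈ Γ → η ∈ Γ → (fun x => ξ x + η x) ∈ Γ
  /-- (C1) `Γ` is a linear subspace (scalar multiplication) -/
  smul_mem : ∀ (c : ℂ) {ξ}, ξ ∈ Γ → (fun x => c • ξ x) ∈ Γ
  /-- (C2) evaluation has dense image in every fibre -/
  dense_eval : ∀ (x : X) (e : E x) (ε : ℝ), 0 < ε → ∃ ξ ∈ Γ, ‖ξ x - e‖ < ε
  /-- (C3) norms of sections are upper semi-continuous -/
  usc_norm : ∀ ξ ∈ Γ, UpperSemicontinuous fun x => ‖ξ x‖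
  /-- (C4) a selection that is locally uniformly approximable by sections is a section -/
  locally_approx_mem : ∀ ξ : ∀ x, E x,
      (∀ (x₀ : X) (ε : ℝ), 0 < ε → ∃ γ ∈ Γ, ∃ U ∈ nhds x₀, ∀ x ∈ U, ‖ξ x - γ x‖ ≤ ε) →
      ξ ∈ Γ

namespace USCField

variable {X : Type u} [TopologicalSpace X] {E : X → Type v}
  [∀ x, NormedAddCommGroup (E x)] [∀ x, NormedSpace ℂ (E x)] [∀ x, CompleteSpace (E x)]

/-- The sections vanishing at infinity, `Γ₀(X, E)`. -/
def Γ₀ (F : USCField X E) : Set (∀ x, E x) :=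
  {ξ | ξ ∈ F.Γ ∧ ∀ ε : ℝ, 0 < ε → ∃ K : Set X, IsCompact K ∧ ∀ x ∉ K, ‖ξ x‖ ≤ ε}

/-- The sections with compact support, `Γ_c(X, E)`. -/
def Γc (F : USCField X E) : Set (∀ x, E x) :=
  {ξ | ξ ∈ F.Γ ∧ ∃ K : Set X, IsCompact K ∧ ∀ x ∉ K, ξ x = 0}

end USCField

/-- The set of sections of the pullback field `p*E` along `p : Y → X`: the selections
`y ↦ ξ y ∈ E (p y)` which are locally uniformly approximable by sections of the form
`γ ∘ p` with `γ ∈ Γ`. -/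
def pbSec {X : Type u} {Y : Type w} [TopologicalSpace Y] (p : Y → X)
    (E : X → Type v) [∀ x, NormedAddCommGroup (E x)] (Γ : Set (∀ x, E x)) :
    Set (∀ y, E (p y)) :=
  {ξ | ∀ (y₀ : Y) (ε : ℝ), 0 < ε → ∃ γ ∈ Γ, ∃ V ∈ nhds y₀, ∀ y ∈ V, ‖ξ y - γ (p y)‖ ≤ ε}

/-- The sections of the pullback field which vanish at infinity. -/
def pbSec₀ {X : Type u} {Y : Type w} [TopologicalSpace Y] (p : Y → X)
    (E : X → Type v) [∀ x, NormedAddCommGroup (E x)] (Γ : Set (∀ x, E x)) :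
    Set (∀ y, E (p y)) :=
  {ξ | ξ ∈ pbSec p E Γ ∧ ∀ ε : ℝ, 0 < ε → ∃ K : Set Y, IsCompact K ∧ ∀ y ∉ K, ‖ξ y‖ ≤ ε}

/-- A bundled u.s.c. field of Banach spaces over `X`. -/
structure BanachSpaceFieldB (X : Type u) [TopologicalSpace X] : Type (max u (v + 1)) where
  E : X → Type v
  [instN : ∀ x, NormedAddCommGroup (E x)]
  [instS : ∀ x, NormedSpace ℂ (E x)]
  [instC : ∀ x, CompleteSpace (E x)]
  F : USCField X E

attribute [instance] BanachSpaceFieldB.instN BanachSpaceFieldB.instS BanachSpaceFieldB.instC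

/-- A bundled u.s.c. field of Banach algebras over `X`: a u.s.c. field of Banach spaces whose
fibres are (complex, possibly non-unital) Banach algebras, with multiplication a contractive
continuous field of bilinear maps (in particular sections are closed under the fibrewise
product). -/
structure BanachAlgFieldB (X : Type u) [TopologicalSpace X] : Type (max u (v + 1)) where
  A : X → Type v
  [instR : ∀ x, NonUnitalNormedRing (A x)]
  [instS : ∀ x, NormedSpace ℂ (A x)]
  [instM : ∀ x, SMulCommClass ℂ (A x) (A x)]
  [instM' : ∀ x, IsScalarTower ℂ (A x) (A x)]
  [instC : ∀ x, CompleteSpace (A x)]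
  F : USCField X A
  mul_mem : ∀ {ξ η}, ξ ∈ F.Γ → η ∈ F.Γ → (fun x => ξ x * η x) ∈ F.Γ

attribute [instance] BanachAlgFieldB.instR BanachAlgFieldB.instS BanachAlgFieldB.instM
  BanachAlgFieldB.instM' BanachAlgFieldB.instC

/-- A u.s.c. field of Banach algebras is non-degenerate if in each fibre the span of products
is dense. -/
def BanachAlgFieldB.Nondegenerate {X : Type u} [TopologicalSpace X]
    (𝔅 : BanachAlgFieldB.{u, v} X) : Prop :=
  ∀ x, Dense (Submodule.span ℂ {c : 𝔅.A x | ∃ a b : 𝔅.A x, c = a * b} : Set (𝔅.A x))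

/-- A bundled Banach `B`-pair over `X`: u.s.c. fields `E^<` (a left Banach `B`-module) and
`E^>` (a right Banach `B`-module) together with a contractive `B`-bilinear pairing
`⟨·,·⟩ : E^< ×_X E^> → B`. -/
structure BanachPairB {X : Type u} [TopologicalSpace X] (𝔅 : BanachAlgFieldB.{u, v} X) :
    Type (max u (v + 1)) where
  Em : X → Type v
  Ep : X → Type v
  [instmN : ∀ x, NormedAddCommGroup (Em x)]
  [instmS : ∀ x, NormedSpace ℂ (Em x)]
  [instmC : ∀ x, CompleteSpace (Em x)]
  [instpN : ∀ x, NormedAddCommGroup (Ep x)]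
  [instpS : ∀ x, NormedSpace ℂ (Ep x)]
  [instpC : ∀ x, CompleteSpace (Ep x)]
  Fm : USCField X Em
  Fp : USCField X Ep
  /-- the left action of `B` on `E^<` -/
  lsmul : ∀ x, 𝔅.A x →L[ℂ] Em x →L[ℂ] Em x
  /-- the right action of `B` on `E^>` -/
  rsmul : ∀ x, Ep x →L[ℂ] 𝔅.A x →L[ℂ] Ep x
  /-- the pairing `⟨·,·⟩ : E^< ×_X E^> → B` -/
  pairing : ∀ x, Em x →L[ℂ] Ep x →L[ℂ] 𝔅.A x
  lsmul_mul : ∀ x (a b : 𝔅.A x) e, lsmul x (a * b) e = lsmul x a (lsmul x b e)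
  rsmul_mul : ∀ x e (a b : 𝔅.A x), rsmul x (rsmul x e a) b = rsmul x e (a * b)
  norm_lsmul : ∀ x (a : 𝔅.A x) e, ‖lsmul x a e‖ ≤ ‖a‖ * ‖e‖
  norm_rsmul : ∀ x e (a : 𝔅.A x), ‖rsmul x e a‖ ≤ ‖e‖ * ‖a‖
  norm_pairing : ∀ x e f, ‖pairing x e f‖ ≤ ‖e‖ * ‖f‖
  pairing_lsmul : ∀ x (a : 𝔅.A x) e f, pairing x (lsmul x a e) f = a * pairing x e f
  pairing_rsmul : ∀ x e f (a : 𝔅.A x), pairing x e (rsmul x f a) = pairing x e f * a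
  lsmul_mem : ∀ {β ξ}, β ∈ 𝔅.F.Γ → ξ ∈ Fm.Γ → (fun x => lsmul x (β x) (ξ x)) ∈ Fm.Γ
  rsmul_mem : ∀ {ξ β}, ξ ∈ Fp.Γ → β ∈ 𝔅.F.Γ → (fun x => rsmul x (ξ x) (β x)) ∈ Fp.Γ
  pairing_mem : ∀ {ξ η}, ξ ∈ Fm.Γ → η ∈ Fp.Γ →
    (fun x => pairing x (ξ x) (η x)) ∈ 𝔅.F.Γ

attribute [instance] BanachPairB.instmN BanachPairB.instmS BanachPairB.instmC
  BanachPairB.instpN BanachPairB.instpS BanachPairB.instpC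

namespace BanachPairB

variable {X : Type u} [TopologicalSpace X] {𝔅 : BanachAlgFieldB.{u, v} X}

/-- Non-degeneracy of a Banach pair: in each fibre, `E^> B` spans a dense subspace of `E^>`
and `B E^<` spans a dense subspace of `E^<`. -/
def Nondegenerate (P : BanachPairB 𝔅) : Prop :=
  (∀ x, Dense (Submodule.span ℂ
      {e : P.Ep x | ∃ (f : P.Ep x) (a : 𝔅.A x), e = P.rsmul x f a} : Set (P.Ep x))) ∧
  (∀ x, Dense (Submodule.span ℂ
      {e : P.Em x | ∃ (a : 𝔅.A x) (f : P.Em x), e = P.lsmul x a f} : Set (P.Em x)))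

end BanachPairB

section Operators

variable {X : Type u} [TopologicalSpace X] {𝔅 : BanachAlgFieldB.{u, v} X}

/-- The fibrewise rank-one operator `|η⟩⟨ξ| : E^> → F^>`, `e ↦ η ⟨ξ, e⟩`. -/
noncomputable def rankOneP (P Q : BanachPairB 𝔅) (x : X) (ξ : P.Em x) (η : Q.Ep x) :
    P.Ep x →L[ℂ] Q.Ep x :=
  (Q.rsmul x η).comp (P.pairing x ξ)

/-- The fibrewise rank-one operator `|η⟩⟨ξ| : F^< → E^<`, `f ↦ ⟨f, η⟩ ξ`. -/
noncomputable def rankOneM (P Q : BanachPairB 𝔅) (x : X) (ξ : P.Em x) (η : Q.Ep x) :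
    Q.Em x →L[ℂ] P.Em x :=
  ((P.lsmul x).flip ξ).comp ((Q.pairing x).flip η)

variable (P Q : BanachPairB 𝔅)

/-- A family of fibrewise operators between two Banach pairs ("a field of linear maps"):
`T^> : E^> → F^>` and `T^< : F^< → E^<`. -/
structure OpFamily (P Q : BanachPairB 𝔅) : Type (max u v) where
  Tp : ∀ x, P.Ep x →L[ℂ] Q.Ep x
  Tm : ∀ x, Q.Em x →L[ℂ] P.Em x

namespace OpFamily

/-- A continuous field of `B`-linear operators between Banach pairs: fibrewise `B`-linear,
adjointable for the pairings, mapping sections to sections and locally bounded. -/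
structure IsLin {P Q : BanachPairB 𝔅} (T : OpFamily P Q) : Prop where
  map_rsmul : ∀ x e (a : 𝔅.A x), T.Tp x (P.rsmul x e a) = Q.rsmul x (T.Tp x e) a
  map_lsmul : ∀ x (a : 𝔅.A x) f, T.Tm x (Q.lsmul x a f) = P.lsmul x a (T.Tm x f)
  adjoint : ∀ x f e, P.pairing x (T.Tm x f) e = Q.pairing x f (T.Tp x e)
  maps_sections_p : ∀ ξ ∈ P.Fp.Γ, (fun x => T.Tp x (ξ x)) ∈ Q.Fp.Γ
  maps_sections_m : ∀ ξ ∈ Q.Fm.Γ, (fun x => T.Tm x (ξ x)) ∈ P.Fm.Γ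
  locally_bounded : ∀ x₀ : X, ∃ U ∈ nhds x₀, ∃ C : ℝ,
    ∀ x ∈ U, ‖T.Tp x‖ ≤ C ∧ ‖T.Tm x‖ ≤ C

/-- Boundedness of a field of operators. -/
def IsBounded {P Q : BanachPairB 𝔅} (T : OpFamily P Q) : Prop :=
  ∃ C : ℝ, ∀ x, ‖T.Tp x‖ ≤ C ∧ ‖T.Tm x‖ ≤ C

end OpFamily

/-- A field of operators is **locally compact** if near every point it can be uniformly
approximated by finite sums of rank-one operators built from arbitrary sections. -/
def IsLocallyCompactOp {P Q : BanachPairB 𝔅} (T : OpFamily P Q) : Prop :=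
  ∀ (x₀ : X) (ε : ℝ), 0 < ε → ∃ U ∈ nhds x₀, ∃ n : ℕ,
    ∃ ξ : Fin n → ∀ x, P.Em x, ∃ η : Fin n → ∀ x, Q.Ep x,
      (∀ i, ξ i ∈ P.Fm.Γ) ∧ (∀ i, η i ∈ Q.Fp.Γ) ∧
      ∀ x ∈ U, ‖T.Tp x - ∑ i, rankOneP P Q x (ξ i x) (η i x)‖ ≤ ε ∧
               ‖T.Tm x - ∑ i, rankOneM P Q x (ξ i x) (η i x)‖ ≤ ε

/-- A field of operators is **compact** if it is a uniform (over `X`) limit of finite sums of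
rank-one operators built from sections vanishing at infinity. -/
def IsCompactOp {P Q : BanachPairB 𝔅} (T : OpFamily P Q) : Prop :=
  ∀ ε : ℝ, 0 < ε → ∃ n : ℕ,
    ∃ ξ : Fin n → ∀ x, P.Em x, ∃ η : Fin n → ∀ x, Q.Ep x,
      (∀ i, ξ i ∈ P.Fm.Γ₀) ∧ (∀ i, η i ∈ Q.Fp.Γ₀) ∧
      ∀ x, ‖T.Tp x - ∑ i, rankOneP P Q x (ξ i x) (η i x)‖ ≤ ε ∧
           ‖T.Tm x - ∑ i, rankOneM P Q x (ξ i x) (η i x)‖ ≤ ε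

end Operators

section Aux

variable {X : Type u} [TopologicalSpace X] {𝔅 : BanachAlgFieldB.{u, v} X}

lemma USCField.sum_mem {E : X → Type v} [∀ x, NormedAddCommGroup (E x)]
    [∀ x, NormedSpace ℂ (E x)] [∀ x, CompleteSpace (E x)] (F : USCField X E)
    {ι : Type*} (s : Finset ι) (f : ι → ∀ x, E x) (h : ∀ i ∈ s, f i ∈ F.Γ) :
    (fun x => ∑ i ∈ s, f i x) ∈ F.Γ := by
  classical
  induction s using Finset.induction with
  | empty => simpa using F.zero_mem
  | @insert a s' ha ih =>
    simp only [Finset.sum_insert ha]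
    exact F.add_mem (h a (Finset.mem_insert_self a s'))
      (ih fun i hi' => h i (Finset.mem_insert_of_mem hi'))

lemma USCField.norm_bound {E : X → Type v} [∀ x, NormedAddCommGroup (E x)]
    [∀ x, NormedSpace ℂ (E x)] [∀ x, CompleteSpace (E x)] (F : USCField X E)
    {ξ : ∀ x, E x} (hξ : ξ ∈ F.Γ) (x₀ : X) :
    ∃ U ∈ nhds x₀, ∀ x ∈ U, ‖ξ x‖ ≤ ‖ξ x₀‖ + 1 := by
  have h := F.usc_norm ξ hξ x₀ (‖ξ x₀‖ + 1) (by linarith)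
  exact ⟨{x | ‖ξ x‖ < ‖ξ x₀‖ + 1}, h, fun x hx => le_of_lt hx⟩

variable (P Q : BanachPairB 𝔅)

lemma norm_rankOneP_le (x : X) (ξ : P.Em x) (η : Q.Ep x) :
    ‖rankOneP P Q x ξ η‖ ≤ ‖ξ‖ * ‖η‖ := by
  refine ContinuousLinearMap.opNorm_le_bound _ (by positivity) fun e => ?_
  calc ‖Q.rsmul x η (P.pairing x ξ e)‖ ≤ ‖η‖ * ‖P.pairing x ξ e‖ := Q.norm_rsmul x η _
    _ ≤ ‖η‖ * (‖ξ‖ * ‖e‖) := by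
        exact mul_le_mul_of_nonneg_left (P.norm_pairing x ξ e) (norm_nonneg η)
    _ = ‖ξ‖ * ‖η‖ * ‖e‖ := by ring

lemma norm_rankOneM_le (x : X) (ξ : P.Em x) (η : Q.Ep x) :
    ‖rankOneM P Q x ξ η‖ ≤ ‖ξ‖ * ‖η‖ := by
  refine ContinuousLinearMap.opNorm_le_bound _ (by positivity) fun f => ?_
  calc ‖P.lsmul x (Q.pairing x f η) ξ‖ ≤ ‖Q.pairing x f η‖ * ‖ξ‖ := P.norm_lsmul x _ ξ
    _ ≤ (‖f‖ * ‖η‖) * ‖ξ‖ := by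
        exact mul_le_mul_of_nonneg_right (Q.norm_pairing x f η) (norm_nonneg ξ)
    _ = ‖ξ‖ * ‖η‖ * ‖f‖ := by ring

lemma rankOneP_sub_sub (x : X) (ξ γ : P.Em x) (η ζ : Q.Ep x) :
    rankOneP P Q x ξ η - rankOneP P Q x γ ζ
      = rankOneP P Q x (ξ - γ) η + rankOneP P Q x γ (η - ζ) := by
  ext e
  simp only [rankOneP, ContinuousLinearMap.sub_apply, ContinuousLinearMap.add_apply,
    ContinuousLinearMap.coe_comp', Function.comp_apply, map_sub,
    ContinuousLinearMap.sub_apply]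
  abel

lemma rankOneM_sub_sub (x : X) (ξ γ : P.Em x) (η ζ : Q.Ep x) :
    rankOneM P Q x ξ η - rankOneM P Q x γ ζ
      = rankOneM P Q x (ξ - γ) η + rankOneM P Q x γ (η - ζ) := by
  ext f
  simp only [rankOneM, ContinuousLinearMap.sub_apply, ContinuousLinearMap.add_apply,
    ContinuousLinearMap.coe_comp', Function.comp_apply, ContinuousLinearMap.flip_apply,
    map_sub, ContinuousLinearMap.sub_apply]
  abel

lemma norm_rankOneP_sub_le (x : X) (ξ γ : P.Em x) (η ζ : Q.Ep x) :
    ‖rankOneP P Q x ξ η - rankOneP P Q x γ ζ‖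
      ≤ ‖ξ - γ‖ * ‖η‖ + ‖γ‖ * ‖η - ζ‖ := by
  rw [rankOneP_sub_sub]
  exact le_trans (norm_add_le _ _)
    (add_le_add (norm_rankOneP_le P Q x _ _) (norm_rankOneP_le P Q x _ _))

lemma norm_rankOneM_sub_le (x : X) (ξ γ : P.Em x) (η ζ : Q.Ep x) :
    ‖rankOneM P Q x ξ η - rankOneM P Q x γ ζ‖
      ≤ ‖ξ - γ‖ * ‖η‖ + ‖γ‖ * ‖η - ζ‖ := by
  rw [rankOneM_sub_sub]
  exact le_trans (norm_add_le _ _)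
    (add_le_add (norm_rankOneM_le P Q x _ _) (norm_rankOneM_le P Q x _ _))

/-- The finite sum of rank-one operator fields determined by families of sections. -/
noncomputable def sumRankOne (n : ℕ) (ξ : Fin n → ∀ x, P.Em x) (η : Fin n → ∀ x, Q.Ep x) :
    OpFamily P Q where
  Tp := fun x => ∑ i, rankOneP P Q x (ξ i x) (η i x)
  Tm := fun x => ∑ i, rankOneM P Q x (ξ i x) (η i x)

lemma sumRankOne_isLin (n : ℕ) (ξ : Fin n → ∀ x, P.Em x) (η : Fin n → ∀ x, Q.Ep x)
    (hξ : ∀ i, ξ i ∈ P.Fm.Γ) (hη : ∀ i, η i ∈ Q.Fp.Γ) :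
    (sumRankOne P Q n ξ η).IsLin := by
  constructor
  · intro x e a
    simp only [sumRankOne, ContinuousLinearMap.sum_apply, rankOneP,
      ContinuousLinearMap.coe_comp', Function.comp_apply, map_sum,
      ContinuousLinearMap.sum_apply, P.pairing_rsmul, ← Q.rsmul_mul]
  · intro x a f
    simp only [sumRankOne, ContinuousLinearMap.sum_apply, rankOneM,
      ContinuousLinearMap.coe_comp', Function.comp_apply, ContinuousLinearMap.flip_apply,
      map_sum, Q.pairing_lsmul, P.lsmul_mul]
  · intro x f e
    simp only [sumRankOne, ContinuousLinearMap.sum_apply, rankOneP, rankOneM,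
      ContinuousLinearMap.coe_comp', Function.comp_apply, ContinuousLinearMap.flip_apply,
      map_sum, ContinuousLinearMap.sum_apply, P.pairing_lsmul, Q.pairing_rsmul]
  · intro ζ hζ
    have : (fun x => (sumRankOne P Q n ξ η).Tp x (ζ x))
        = fun x => ∑ i, Q.rsmul x (η i x) (P.pairing x (ξ i x) (ζ x)) := by
      funext x
      simp [sumRankOne, rankOneP]
    rw [this]
    exact Q.Fp.sum_mem Finset.univ _ fun i _ =>
      Q.rsmul_mem (hη i) (P.pairing_mem (hξ i) hζ)
  · intro ζ hζ
    have : (fun x => (sumRankOne P Q n ξ η).Tm x (ζ x))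
        = fun x => ∑ i, P.lsmul x (Q.pairing x (ζ x) (η i x)) (ξ i x) := by
      funext x
      simp [sumRankOne, rankOneM]
    rw [this]
    exact P.Fm.sum_mem Finset.univ _ fun i _ =>
      P.lsmul_mem (Q.pairing_mem hζ (hη i)) (hξ i)
  · intro x₀
    choose U hU hUb using fun i => P.Fm.norm_bound (hξ i) x₀
    choose V hV hVb using fun i => Q.Fp.norm_bound (hη i) x₀
    refine ⟨(⋂ i, U i) ∩ ⋂ i, V i,
      Filter.inter_mem (Filter.iInter_mem.2 hU) (Filter.iInter_mem.2 hV),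
      ∑ i, (‖ξ i x₀‖ + 1) * (‖η i x₀‖ + 1), fun x hx => ?_⟩
    obtain ⟨hx1, hx2⟩ := hx
    simp only [Set.mem_iInter] at hx1 hx2
    have key : ∀ i : Fin n, ‖ξ i x‖ * ‖η i x‖ ≤ (‖ξ i x₀‖ + 1) * (‖η i x₀‖ + 1) := by
      intro i
      exact mul_le_mul (hUb i x (hx1 i)) (hVb i x (hx2 i)) (norm_nonneg _)
        (by positivity)
    constructor
    · show ‖∑ i, rankOneP P Q x (ξ i x) (η i x)‖ ≤ _
      exact le_trans (norm_sum_le _ _)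
        (Finset.sum_le_sum fun i _ => le_trans (norm_rankOneP_le P Q x _ _) (key i))
    · show ‖∑ i, rankOneM P Q x (ξ i x) (η i x)‖ ≤ _
      exact le_trans (norm_sum_le _ _)
        (Finset.sum_le_sum fun i _ => le_trans (norm_rankOneM_le P Q x _ _) (key i))

lemma sumRankOne_isLocallyCompact (n : ℕ) (ξ : Fin n → ∀ x, P.Em x)
    (η : Fin n → ∀ x, Q.Ep x) (hξ : ∀ i, ξ i ∈ P.Fm.Γ) (hη : ∀ i, η i ∈ Q.Fp.Γ) :
    IsLocallyCompactOp (sumRankOne P Q n ξ η) := by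
  intro x₀ ε hε
  refine ⟨Set.univ, Filter.univ_mem, n, ξ, η, hξ, hη, fun x _ => ⟨?_, ?_⟩⟩ <;>
    simp [sumRankOne, hε.le]

end Aux

/-! ## Statement 7: pullbacks of locally compact operators -/

section Statement7

variable {X : Type u} {Y : Type u} [TopologicalSpace X] [TopologicalSpace Y]

/-- The pullback `p*B` of a u.s.c. field of Banach algebras along `p : Y → X`: the fibres are
`B_{p(y)}` and the sections are exactly the selections locally approximable by `β ∘ p`,
`β ∈ Γ(X,B)` (this is hypothesised via `FY` with `FY.Γ = pbSec p ...`). -/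
@[reducible] def pullbackAlg (p : Y → X) (𝔅 : BanachAlgFieldB.{u, v} X)
    (FY : USCField Y (fun y => 𝔅.A (p y)))
    (hmul : ∀ {ξ η}, ξ ∈ FY.Γ → η ∈ FY.Γ → (fun y => ξ y * η y) ∈ FY.Γ) :
    BanachAlgFieldB.{u, v} Y :=
  { A := fun y => 𝔅.A (p y), F := FY, mul_mem := hmul }

/-- The pullback `p*E` of a Banach `B`-pair along `p : Y → X`, as a Banach `p*B`-pair: the
fibres and module operations are those of `E` at `p y`, and the section spaces are the
pullback section spaces. -/
@[reducible] def pullbackPair (p : Y → X) {𝔅 : BanachAlgFieldB.{u, v} X} (P : BanachPairB 𝔅)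
    (FY : USCField Y (fun y => 𝔅.A (p y)))
    (hmul : ∀ {ξ η}, ξ ∈ FY.Γ → η ∈ FY.Γ → (fun y => ξ y * η y) ∈ FY.Γ)
    (FmY : USCField Y (fun y => P.Em (p y))) (FpY : USCField Y (fun y => P.Ep (p y)))
    (hls : ∀ {β ξ}, β ∈ FY.Γ → ξ ∈ FmY.Γ → (fun y => P.lsmul (p y) (β y) (ξ y)) ∈ FmY.Γ)
    (hrs : ∀ {ξ β}, ξ ∈ FpY.Γ → β ∈ FY.Γ → (fun y => P.rsmul (p y) (ξ y) (β y)) ∈ FpY.Γ)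
    (hpair : ∀ {ξ η}, ξ ∈ FmY.Γ → η ∈ FpY.Γ →
      (fun y => P.pairing (p y) (ξ y) (η y)) ∈ FY.Γ) :
    BanachPairB (pullbackAlg p 𝔅 FY @hmul) where
  Em := fun y => P.Em (p y)
  Ep := fun y => P.Ep (p y)
  Fm := FmY
  Fp := FpY
  lsmul := fun y => P.lsmul (p y)
  rsmul := fun y => P.rsmul (p y)
  pairing := fun y => P.pairing (p y)
  lsmul_mul := fun y => P.lsmul_mul (p y)
  rsmul_mul := fun y => P.rsmul_mul (p y)
  norm_lsmul := fun y => P.norm_lsmul (p y)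
  norm_rsmul := fun y => P.norm_rsmul (p y)
  norm_pairing := fun y => P.norm_pairing (p y)
  pairing_lsmul := fun y => P.pairing_lsmul (p y)
  pairing_rsmul := fun y => P.pairing_rsmul (p y)
  lsmul_mem := @hls
  rsmul_mem := @hrs
  pairing_mem := @hpair

/-- **Pullbacks and locally compact operators.**  Let `p : Y → X` be continuous between
locally compact Hausdorff spaces, `B` a u.s.c. field of Banach algebras over `X` and `E`,
`F` Banach `B`-pairs.  If `T ∈ K^loc_B(E,F)` then `p*T ∈ K^loc_{p*B}(p*E, p*F)`; conversely
every `T̃ ∈ K^loc_{p*B}(p*E, p*F)` can, near every point of `Y`, be uniformly approximated by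
operators of the form `p*T` with `T ∈ K^loc_B(E,F)`. -/
theorem pullback_locally_compact_operators
    [LocallyCompactSpace X] [T2Space X] [LocallyCompactSpace Y] [T2Space Y]
    (p : Y → X) (hp : Continuous p)
    {𝔅 : BanachAlgFieldB.{u, v} X} (P Q : BanachPairB 𝔅)
    (FY : USCField Y (fun y => 𝔅.A (p y))) (hFY : FY.Γ = pbSec p 𝔅.A 𝔅.F.Γ)
    (hmul : ∀ {ξ η}, ξ ∈ FY.Γ → η ∈ FY.Γ → (fun y => ξ y * η y) ∈ FY.Γ)
    (FmP : USCField Y (fun y => P.Em (p y))) (hFmP : FmP.Γ = pbSec p P.Em P.Fm.Γ)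
    (FpP : USCField Y (fun y => P.Ep (p y))) (hFpP : FpP.Γ = pbSec p P.Ep P.Fp.Γ)
    (FmQ : USCField Y (fun y => Q.Em (p y))) (hFmQ : FmQ.Γ = pbSec p Q.Em Q.Fm.Γ)
    (FpQ : USCField Y (fun y => Q.Ep (p y))) (hFpQ : FpQ.Γ = pbSec p Q.Ep Q.Fp.Γ)
    (hlsP : ∀ {β ξ}, β ∈ FY.Γ → ξ ∈ FmP.Γ → (fun y => P.lsmul (p y) (β y) (ξ y)) ∈ FmP.Γ)
    (hrsP : ∀ {ξ β}, ξ ∈ FpP.Γ → β ∈ FY.Γ → (fun y => P.rsmul (p y) (ξ y) (β y)) ∈ FpP.Γ)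
    (hpairP : ∀ {ξ η}, ξ ∈ FmP.Γ → η ∈ FpP.Γ →
      (fun y => P.pairing (p y) (ξ y) (η y)) ∈ FY.Γ)
    (hlsQ : ∀ {β ξ}, β ∈ FY.Γ → ξ ∈ FmQ.Γ → (fun y => Q.lsmul (p y) (β y) (ξ y)) ∈ FmQ.Γ)
    (hrsQ : ∀ {ξ β}, ξ ∈ FpQ.Γ → β ∈ FY.Γ → (fun y => Q.rsmul (p y) (ξ y) (β y)) ∈ FpQ.Γ)
    (hpairQ : ∀ {ξ η}, ξ ∈ FmQ.Γ → η ∈ FpQ.Γ →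
      (fun y => Q.pairing (p y) (ξ y) (η y)) ∈ FY.Γ) :
    -- the pullback of a locally compact operator is locally compact
    (∀ T : OpFamily P Q, T.IsLin → IsLocallyCompactOp T →
      IsLocallyCompactOp
        (⟨fun y => T.Tp (p y), fun y => T.Tm (p y)⟩ :
          OpFamily (pullbackPair p P FY @hmul FmP FpP @hlsP @hrsP @hpairP)
                   (pullbackPair p Q FY @hmul FmQ FpQ @hlsQ @hrsQ @hpairQ))) ∧
    -- and conversely, locally compact operators on the pullback are locally approximable
    -- by pullbacks of locally compact operators
    (∀ T' : OpFamily (pullbackPair p P FY @hmul FmP FpP @hlsP @hrsP @hpairP)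
                     (pullbackPair p Q FY @hmul FmQ FpQ @hlsQ @hrsQ @hpairQ),
      T'.IsLin → IsLocallyCompactOp T' →
      ∀ (y₀ : Y) (ε : ℝ), 0 < ε → ∃ V ∈ nhds y₀, ∃ T : OpFamily P Q,
        T.IsLin ∧ IsLocallyCompactOp T ∧
        ∀ y ∈ V, ‖T'.Tp y - T.Tp (p y)‖ ≤ ε ∧ ‖T'.Tm y - T.Tm (p y)‖ ≤ ε) := by
  constructor
  · -- pullback of a locally compact operator is locally compact
    intro T _ hlc y₀ ε hε
    obtain ⟨U, hU, n, ξ, η, hξ, hη, hb⟩ := hlc (p y₀) ε hε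
    refine ⟨p ⁻¹' U, hp.continuousAt.preimage_mem_nhds hU, n,
      fun i y => ξ i (p y), fun i y => η i (p y), ?_, ?_, ?_⟩
    · intro i
      show (fun y => ξ i (p y)) ∈ FmP.Γ
      rw [hFmP]
      intro y₁ δ hδ
      exact ⟨ξ i, hξ i, Set.univ, Filter.univ_mem, fun y _ => by simp [hδ.le]⟩
    · intro i
      show (fun y => η i (p y)) ∈ FpQ.Γ
      rw [hFpQ]
      intro y₁ δ hδ
      exact ⟨η i, hη i, Set.univ, Filter.univ_mem, fun y _ => by simp [hδ.le]⟩
    · intro y hy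
      exact hb (p y) hy
  · -- converse: locally compact operators on the pullback are locally approximable by
    -- pullbacks of locally compact operators
    intro T' _ hlc y₀ ε hε
    obtain ⟨U, hU, n, ξ', η', hξ', hη', hb⟩ := hlc y₀ (ε / 2) (by positivity)
    set K : ℝ := ∑ i, (‖ξ' i y₀‖ + ‖η' i y₀‖ + 3) with hKdef
    have hK : 0 ≤ K := Finset.sum_nonneg fun i _ => by positivity
    set δ : ℝ := min 1 ((ε / 2) / (K + 1)) with hδdef
    have hδpos : 0 < δ := lt_min one_pos (by positivity)
    have hδ1 : δ ≤ 1 := min_le_left _ _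
    have hδK : δ * K ≤ ε / 2 := by
      have h1 : δ ≤ (ε / 2) / (K + 1) := min_le_right _ _
      have h2 : δ * (K + 1) ≤ ((ε / 2) / (K + 1)) * (K + 1) :=
        mul_le_mul_of_nonneg_right h1 (by positivity)
      have h3 : ((ε / 2) / (K + 1)) * (K + 1) = ε / 2 := div_mul_cancel₀ _ (by positivity)
      nlinarith [hδpos.le]
    -- approximate the sections of the pullback fields by pulled-back sections
    have hξp : ∀ i, ξ' i ∈ pbSec p P.Em P.Fm.Γ := fun i => by
      rw [← hFmP]; exact hξ' i
    have hηp : ∀ i, η' i ∈ pbSec p Q.Ep Q.Fp.Γ := fun i => by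
      rw [← hFpQ]; exact hη' i
    choose γ hγΓ Vγ hVγ hγ using fun i => hξp i y₀ δ hδpos
    choose ζ hζΓ Vζ hVζ hζ using fun i => hηp i y₀ δ hδpos
    -- local norm bounds
    have hη'mem : ∀ i, η' i ∈ FpQ.Γ := fun i => hη' i
    choose Wη hWη hWηb using fun i => FpQ.norm_bound (hη'mem i) y₀
    choose Uγ hUγ hUγb using fun i => P.Fm.norm_bound (hγΓ i) (p y₀)
    have hγ0 : ∀ i, ‖γ i (p y₀)‖ ≤ ‖ξ' i y₀‖ + 1 := by
      intro i
      have h1 : ‖ξ' i y₀ - γ i (p y₀)‖ ≤ δ := hγ i y₀ (mem_of_mem_nhds (hVγ i))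
      have h2 := norm_sub_norm_le (ξ' i y₀) (γ i (p y₀))
      have h3 : ‖γ i (p y₀)‖ - ‖ξ' i y₀‖ ≤ ‖ξ' i y₀ - γ i (p y₀)‖ := by
        have := norm_sub_norm_le (γ i (p y₀)) (ξ' i y₀)
        rwa [norm_sub_rev] at this
      linarith
    set V : Set Y := U ∩ ⋂ i, (Vγ i ∩ Vζ i ∩ Wη i ∩ p ⁻¹' Uγ i) with hVdef
    have hV : V ∈ nhds y₀ := by
      refine Filter.inter_mem hU (Filter.iInter_mem.2 fun i => ?_)
      exact Filter.inter_mem (Filter.inter_mem (Filter.inter_mem (hVγ i) (hVζ i)) (hWη i))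
        (hp.continuousAt.preimage_mem_nhds (hUγ i))
    refine ⟨V, hV, sumRankOne P Q n γ ζ, sumRankOne_isLin P Q n γ ζ hγΓ hζΓ,
      sumRankOne_isLocallyCompact P Q n γ ζ hγΓ hζΓ, ?_⟩
    intro y hy
    obtain ⟨hyU, hyI⟩ := hy
    simp only [Set.mem_iInter, Set.mem_inter_iff, Set.mem_preimage] at hyI
    -- per-term estimates
    have hterm : ∀ i : Fin n,
        ‖ξ' i y - γ i (p y)‖ * ‖η' i y‖ + ‖γ i (p y)‖ * ‖η' i y - ζ i (p y)‖
          ≤ δ * (‖ξ' i y₀‖ + ‖η' i y₀‖ + 3) := by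
      intro i
      obtain ⟨⟨⟨h1, h2⟩, h3⟩, h4⟩ := hyI i
      have e1 : ‖ξ' i y - γ i (p y)‖ ≤ δ := hγ i y h1
      have e2 : ‖η' i y - ζ i (p y)‖ ≤ δ := hζ i y h2
      have e3 : ‖η' i y‖ ≤ ‖η' i y₀‖ + 1 := hWηb i y h3
      have e4 : ‖γ i (p y)‖ ≤ ‖γ i (p y₀)‖ + 1 := hUγb i (p y) h4
      have e5 : ‖γ i (p y)‖ ≤ ‖ξ' i y₀‖ + 2 := by linarith [hγ0 i]
      calc ‖ξ' i y - γ i (p y)‖ * ‖η' i y‖ + ‖γ i (p y)‖ * ‖η' i y - ζ i (p y)‖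
          ≤ δ * (‖η' i y₀‖ + 1) + (‖ξ' i y₀‖ + 2) * δ := by
            refine add_le_add (mul_le_mul e1 e3 (norm_nonneg _) hδpos.le) ?_
            exact mul_le_mul e5 e2 (norm_nonneg _) (by positivity)
        _ = δ * (‖ξ' i y₀‖ + ‖η' i y₀‖ + 3) := by ring
    have hsum : ∀ i : Fin n,
        ‖rankOneP P Q (p y) (ξ' i y) (η' i y)
            - rankOneP P Q (p y) (γ i (p y)) (ζ i (p y))‖
          ≤ δ * (‖ξ' i y₀‖ + ‖η' i y₀‖ + 3) :=
      fun i => le_trans (norm_rankOneP_sub_le P Q (p y) _ _ _ _) (hterm i)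
    have hsumM : ∀ i : Fin n,
        ‖rankOneM P Q (p y) (ξ' i y) (η' i y)
            - rankOneM P Q (p y) (γ i (p y)) (ζ i (p y))‖
          ≤ δ * (‖ξ' i y₀‖ + ‖η' i y₀‖ + 3) :=
      fun i => le_trans (norm_rankOneM_sub_le P Q (p y) _ _ _ _) (hterm i)
    obtain ⟨hbp, hbm⟩ := hb y hyU
    constructor
    · calc ‖T'.Tp y - (sumRankOne P Q n γ ζ).Tp (p y)‖
          ≤ ‖T'.Tp y - ∑ i, rankOneP P Q (p y) (ξ' i y) (η' i y)‖
            + ‖(∑ i, rankOneP P Q (p y) (ξ' i y) (η' i y))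
                - (sumRankOne P Q n γ ζ).Tp (p y)‖ :=
            norm_sub_le_norm_sub_add_norm_sub _ _ _
        _ ≤ ε / 2 + ∑ i, (δ * (‖ξ' i y₀‖ + ‖η' i y₀‖ + 3)) := by
            refine add_le_add hbp ?_
            show ‖(∑ i, rankOneP P Q (p y) (ξ' i y) (η' i y))
                - ∑ i, rankOneP P Q (p y) (γ i (p y)) (ζ i (p y))‖ ≤ _
            rw [← Finset.sum_sub_distrib]
            exact le_trans (norm_sum_le _ _) (Finset.sum_le_sum fun i _ => hsum i)
        _ ≤ ε / 2 + ε / 2 := by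
            rw [← Finset.mul_sum]
            linarith [hδK]
        _ = ε := by ring
    · calc ‖T'.Tm y - (sumRankOne P Q n γ ζ).Tm (p y)‖
          ≤ ‖T'.Tm y - ∑ i, rankOneM P Q (p y) (ξ' i y) (η' i y)‖
            + ‖(∑ i, rankOneM P Q (p y) (ξ' i y) (η' i y))
                - (sumRankOne P Q n γ ζ).Tm (p y)‖ :=
            norm_sub_le_norm_sub_add_norm_sub _ _ _
        _ ≤ ε / 2 + ∑ i, (δ * (‖ξ' i y₀‖ + ‖η' i y₀‖ + 3)) := by
            refine add_le_add hbm ?_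
            show ‖(∑ i, rankOneM P Q (p y) (ξ' i y) (η' i y))
                - ∑ i, rankOneM P Q (p y) (γ i (p y)) (ζ i (p y))‖ ≤ _
            rw [← Finset.sum_sub_distrib]
            exact le_trans (norm_sum_le _ _) (Finset.sum_le_sum fun i _ => hsumM i)
        _ ≤ ε / 2 + ε / 2 := by
            rw [← Finset.mul_sum]
            linarith [hδK]
        _ = ε := by ring

end Statement7
end

section
/- Let G be a locally compact Hausdorff groupoid with open range and source maps and unit space X, and let A, B be G-Banach algebras. A pair (E,T), where E is a non-degenerate graded G-Banach A-B-pair and T ∈ Lin_B(E) is odd, is a KK^ban_G-cycle from A to B if and only if [π_A(a), T] and π_A(a)(1 − T²) are compact operators on E for all a ∈ Γ_0(X,A), and π(ã)(V_E ∘ (s*T) ∘ V_E⁻¹ − r*T) ∈ K_{r*B}(r*E) for all ã ∈ Γ_0(G, r*A). -/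
universe u v w x y z

/-! ## Topological groupoids, actions, equivalences -/

/-- A topological groupoid structure on a space `G` of morphisms over a space `O` of objects.
The multiplication is a total function which is only meaningful on composable pairs
(pairs `(γ, γ')` with `s γ = r γ'`). -/
structure TopGroupoid (G : Type u) (O : Type v)
    [TopologicalSpace G] [TopologicalSpace O] where
  r : G → O
  s : G → O
  unit : O → G
  mul : G → G → G
  inv : G → G
  r_unit : ∀ x, r (unit x) = x
  s_unit : ∀ x, s (unit x) = x
  r_mul : ∀ γ γ', s γ = r γ' → r (mul γ γ') = r γ
  s_mul : ∀ γ γ', s γ = r γ' → s (mul γ γ') = s γ'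
  mul_assoc : ∀ γ₁ γ₂ γ₃, s γ₁ = r γ₂ → s γ₂ = r γ₃ →
    mul (mul γ₁ γ₂) γ₃ = mul γ₁ (mul γ₂ γ₃)
  unit_mul : ∀ γ, mul (unit (r γ)) γ = γ
  mul_unit : ∀ γ, mul γ (unit (s γ)) = γ
  r_inv : ∀ γ, r (inv γ) = s γ
  s_inv : ∀ γ, s (inv γ) = r γ
  mul_inv : ∀ γ, mul γ (inv γ) = unit (r γ)
  inv_mul : ∀ γ, mul (inv γ) γ = unit (s γ)
  continuous_r : Continuous r
  continuous_s : Continuous s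
  continuous_unit : Continuous unit
  continuous_inv : Continuous inv
  continuousOn_mul : ContinuousOn (fun p : G × G => mul p.1 p.2) {p | s p.1 = r p.2}

/-- A groupoid "with open range and source maps". -/
def TopGroupoid.OpenMaps {G : Type u} {O : Type v} [TopologicalSpace G] [TopologicalSpace O]
    (𝒢 : TopGroupoid G O) : Prop :=
  IsOpenMap 𝒢.r ∧ IsOpenMap 𝒢.s

/-- A "locally compact Hausdorff groupoid" is a topological groupoid whose total space (and
hence unit space) is locally compact Hausdorff; we record this as a property. -/
def TopGroupoid.IsLCH {G : Type u} {O : Type v} [TopologicalSpace G] [TopologicalSpace O]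
    (_ : TopGroupoid G O) : Prop :=
  LocallyCompactSpace G ∧ T2Space G ∧ LocallyCompactSpace O ∧ T2Space O

/-- A continuous left action of a topological groupoid on a space `Ω` with anchor map `ρ`.
Again the action map is total but only meaningful on composable pairs. -/
structure GLeftAction {G : Type u} {O : Type v} [TopologicalSpace G] [TopologicalSpace O]
    (𝒢 : TopGroupoid G O) (Ω : Type w) [TopologicalSpace Ω] where
  ρ : Ω → O
  act : G → Ω → Ω
  continuous_ρ : Continuous ρ
  ρ_act : ∀ γ ω, 𝒢.s γ = ρ ω → ρ (act γ ω) = 𝒢.r γ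
  unit_act : ∀ ω, act (𝒢.unit (ρ ω)) ω = ω
  mul_act : ∀ γ γ' ω, 𝒢.s γ = 𝒢.r γ' → 𝒢.s γ' = ρ ω →
    act (𝒢.mul γ γ') ω = act γ (act γ' ω)
  continuousOn_act : ContinuousOn (fun p : G × Ω => act p.1 p.2) {p | 𝒢.s p.1 = ρ p.2}

/-- A continuous right action of a topological groupoid on a space `Ω` with anchor map `σ`. -/
structure GRightAction {H : Type u} {P : Type v} [TopologicalSpace H] [TopologicalSpace P]
    (ℋ : TopGroupoid H P) (Ω : Type w) [TopologicalSpace Ω] where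
  σ : Ω → P
  act : Ω → H → Ω
  continuous_σ : Continuous σ
  σ_act : ∀ ω η, σ ω = ℋ.r η → σ (act ω η) = ℋ.s η
  act_unit : ∀ ω, act ω (ℋ.unit (σ ω)) = ω
  act_mul : ∀ ω η η', σ ω = ℋ.r η → ℋ.s η = ℋ.r η' →
    act ω (ℋ.mul η η') = act (act ω η) η'
  continuousOn_act : ContinuousOn (fun p : Ω × H => act p.1 p.2) {p | σ p.1 = ℋ.r p.2}

namespace GLeftAction

variable {G : Type u} {O : Type v} [TopologicalSpace G] [TopologicalSpace O]
variable {𝒢 : TopGroupoid G O} {Ω : Type w} [TopologicalSpace Ω]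

/-- Freeness of a left groupoid action. -/
def Free (a : GLeftAction 𝒢 Ω) : Prop :=
  ∀ γ ω, 𝒢.s γ = a.ρ ω → a.act γ ω = ω → γ = 𝒢.unit (a.ρ ω)

/-- Properness of a left groupoid action: the map `(γ, ω) ↦ (γ·ω, ω)` on the space of
composable pairs is a proper map. -/
def Proper (a : GLeftAction 𝒢 Ω) : Prop :=
  IsProperMap (fun p : {p : G × Ω // 𝒢.s p.1 = a.ρ p.2} =>
    ((a.act p.1.1 p.1.2, p.1.2) : Ω × Ω))

end GLeftAction

namespace GRightAction

variable {H : Type u} {P : Type v} [TopologicalSpace H] [TopologicalSpace P]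
variable {ℋ : TopGroupoid H P} {Ω : Type w} [TopologicalSpace Ω]

/-- Freeness of a right groupoid action. -/
def Free (a : GRightAction ℋ Ω) : Prop :=
  ∀ ω η, a.σ ω = ℋ.r η → a.act ω η = ω → η = ℋ.unit (a.σ ω)

/-- Properness of a right groupoid action. -/
def Proper (a : GRightAction ℋ Ω) : Prop :=
  IsProperMap (fun p : {p : Ω × H // a.σ p.1 = ℋ.r p.2} =>
    ((a.act p.1.1 p.1.2, p.1.1) : Ω × Ω))

end GRightAction

/-- A `𝒢`-`ℋ`-bimodule: commuting continuous left `𝒢`- and right `ℋ`-actions on `Ω`. -/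
structure GBimodule {G : Type u} {O : Type v} {H : Type w} {P : Type x}
    [TopologicalSpace G] [TopologicalSpace O] [TopologicalSpace H] [TopologicalSpace P]
    (𝒢 : TopGroupoid G O) (ℋ : TopGroupoid H P) (Ω : Type y) [TopologicalSpace Ω] where
  left : GLeftAction 𝒢 Ω
  right : GRightAction ℋ Ω
  σ_actl : ∀ γ ω, 𝒢.s γ = left.ρ ω → right.σ (left.act γ ω) = right.σ ω
  ρ_actr : ∀ ω η, right.σ ω = ℋ.r η → left.ρ (right.act ω η) = left.ρ ω
  commute : ∀ γ ω η, 𝒢.s γ = left.ρ ω → right.σ ω = ℋ.r η →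
    left.act γ (right.act ω η) = right.act (left.act γ ω) η

/-- A graph ("generalised morphism datum") from `𝒢` to `ℋ`: a bimodule whose left anchor map
`ρ` is a principal fibration with structure groupoid `ℋ`. -/
structure IsGraph {G : Type u} {O : Type v} {H : Type w} {P : Type x}
    [TopologicalSpace G] [TopologicalSpace O] [TopologicalSpace H] [TopologicalSpace P]
    {𝒢 : TopGroupoid G O} {ℋ : TopGroupoid H P} {Ω : Type y} [TopologicalSpace Ω]
    (M : GBimodule 𝒢 ℋ Ω) : Prop where
  free_right : M.right.Free
  proper_right : M.right.Proper
  ρ_open : IsOpenMap M.left.ρ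
  ρ_surj : Function.Surjective M.left.ρ
  fibre_trans : ∀ ω ω', M.left.ρ ω = M.left.ρ ω' →
    ∃ η, M.right.σ ω = ℋ.r η ∧ M.right.act ω η = ω'

/-- A `𝒢`-`ℋ`-equivalence bimodule. -/
structure IsEquivalence {G : Type u} {O : Type v} {H : Type w} {P : Type x}
    [TopologicalSpace G] [TopologicalSpace O] [TopologicalSpace H] [TopologicalSpace P]
    {𝒢 : TopGroupoid G O} {ℋ : TopGroupoid H P} {Ω : Type y} [TopologicalSpace Ω]
    (M : GBimodule 𝒢 ℋ Ω) : Prop where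
  free_left : M.left.Free
  proper_left : M.left.Proper
  free_right : M.right.Free
  proper_right : M.right.Proper
  ρ_open : IsOpenMap M.left.ρ
  ρ_surj : Function.Surjective M.left.ρ
  /-- the fibres of `ρ` are exactly the `ℋ`-orbits, i.e. `ρ` induces a homeomorphism
  `Ω/ℋ ≅ 𝒢⁽⁰⁾` (openness + surjectivity + this condition). -/
  ρ_fibres : ∀ ω ω', M.left.ρ ω = M.left.ρ ω' ↔
    ∃ η, M.right.σ ω = ℋ.r η ∧ M.right.act ω η = ω'
  σ_open : IsOpenMap M.right.σ
  σ_surj : Function.Surjective M.right.σ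
  /-- the fibres of `σ` are exactly the `𝒢`-orbits, i.e. `σ` induces a homeomorphism
  `𝒢\Ω ≅ ℋ⁽⁰⁾`. -/
  σ_fibres : ∀ ω ω', M.right.σ ω = M.right.σ ω' ↔
    ∃ γ, 𝒢.s γ = M.left.ρ ω ∧ M.left.act γ ω = ω'

/-- A strict morphism of topological groupoids (a continuous functor). -/
structure StrictMorphism {G : Type u} {O : Type v} {H : Type w} {P : Type x}
    [TopologicalSpace G] [TopologicalSpace O] [TopologicalSpace H] [TopologicalSpace P]
    (𝒢 : TopGroupoid G O) (ℋ : TopGroupoid H P) where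
  toFun : G → H
  obj : O → P
  continuous_toFun : Continuous toFun
  continuous_obj : Continuous obj
  map_unit : ∀ x, toFun (𝒢.unit x) = ℋ.unit (obj x)
  map_r : ∀ γ, ℋ.r (toFun γ) = obj (𝒢.r γ)
  map_s : ∀ γ, ℋ.s (toFun γ) = obj (𝒢.s γ)
  map_mul : ∀ γ γ', 𝒢.s γ = 𝒢.r γ' → toFun (𝒢.mul γ γ') = ℋ.mul (toFun γ) (toFun γ')

/-- The carrier of the pullback groupoid `p*(𝒢)` along `p : Y → 𝒢⁽⁰⁾`. -/
def PullbackCarrier {G : Type u} {O : Type v} [TopologicalSpace G] [TopologicalSpace O]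
    (𝒢 : TopGroupoid G O) {Y : Type w} [TopologicalSpace Y] (p : Y → O) : Type (max u w) :=
  {t : Y × G × Y // p t.1 = 𝒢.r t.2.1 ∧ 𝒢.s t.2.1 = p t.2.2}

instance {G : Type u} {O : Type v} [TopologicalSpace G] [TopologicalSpace O]
    (𝒢 : TopGroupoid G O) {Y : Type w} [TopologicalSpace Y] (p : Y → O) :
    TopologicalSpace (PullbackCarrier 𝒢 p) :=
  instTopologicalSpaceSubtype

/-- A topological groupoid structure on `PullbackCarrier 𝒢 p` realises the pullback groupoid
`p*(𝒢)` if its structure maps are the canonical ones. -/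
structure IsPullbackGroupoid {G : Type u} {O : Type v} [TopologicalSpace G] [TopologicalSpace O]
    (𝒢 : TopGroupoid G O) {Y : Type w} [TopologicalSpace Y] (p : Y → O)
    (PB : TopGroupoid (PullbackCarrier 𝒢 p) Y) : Prop where
  r_eq : ∀ t : PullbackCarrier 𝒢 p, PB.r t = t.1.1
  s_eq : ∀ t : PullbackCarrier 𝒢 p, PB.s t = t.1.2.2
  unit_eq : ∀ y : Y, (PB.unit y).1 = (y, 𝒢.unit (p y), y)
  mul_eq : ∀ t t' : PullbackCarrier 𝒢 p, t.1.2.2 = t'.1.1 →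
    (PB.mul t t').1 = (t.1.1, 𝒢.mul t.1.2.1 t'.1.2.1, t'.1.2.2)
  inv_eq : ∀ t : PullbackCarrier 𝒢 p, (PB.inv t).1 = (t.1.2.2, 𝒢.inv t.1.2.1, t.1.1)

/-! ## Groupoid actions on fields of Banach algebras and Banach pairs, and `KK^ban`-cycles -/

section GFields

variable {G : Type u} {O : Type u} [TopologicalSpace G] [TopologicalSpace O]

/-- An action of a topological groupoid `𝒢` on a u.s.c. field of Banach algebras over
`O = 𝒢⁽⁰⁾`: an isometric multiplicative isomorphism `α : s*B → r*B` (given fibrewise,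
together with its inverse), compatible with composition in `𝒢` and mapping sections of
`s*B` to sections of `r*B`.  This makes `B` a `𝒢`-Banach algebra. -/
structure AlgAction (𝒢 : TopGroupoid G O) (𝔅 : BanachAlgFieldB.{u, v} O) :
    Type (max u v) where
  act : ∀ γ : G, 𝔅.A (𝒢.s γ) →L[ℂ] 𝔅.A (𝒢.r γ)
  actInv : ∀ γ : G, 𝔅.A (𝒢.r γ) →L[ℂ] 𝔅.A (𝒢.s γ)
  act_actInv : ∀ γ a, act γ (actInv γ a) = a
  actInv_act : ∀ γ a, actInv γ (act γ a) = a
  isometric : ∀ γ a, ‖act γ a‖ = ‖a‖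
  map_mul : ∀ γ a b, act γ (a * b) = act γ a * act γ b
  act_mul : ∀ γ γ' (h : 𝒢.s γ = 𝒢.r γ') (a : 𝔅.A (𝒢.s γ')),
    act (𝒢.mul γ γ') (cast (congrArg 𝔅.A (𝒢.s_mul γ γ' h).symm) a)
      = cast (congrArg 𝔅.A (𝒢.r_mul γ γ' h).symm)
          (act γ (cast (congrArg 𝔅.A h.symm) (act γ' a)))
  sect : ∀ ξ ∈ pbSec 𝒢.s 𝔅.A 𝔅.F.Γ, (fun γ => act γ (ξ γ)) ∈ pbSec 𝒢.r 𝔅.A 𝔅.F.Γ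

/-- An action of `𝒢` on a Banach `B`-pair `P` over `O = 𝒢⁽⁰⁾`, compatible with a given
action of `𝒢` on `B`; the pair of fibrewise isomorphisms (with inverses) corresponds to
Lafforgue's invertible isometric "unitary" `V_E ∈ L_{r*B}(s*E, r*E)`.  This makes `P` a
`𝒢`-Banach `B`-pair. -/
structure PairAction (𝒢 : TopGroupoid G O) {𝔅 : BanachAlgFieldB.{u, v} O}
    (AB : AlgAction 𝒢 𝔅) (P : BanachPairB 𝔅) : Type (max u v) where
  actp : ∀ γ : G, P.Ep (𝒢.s γ) →L[ℂ] P.Ep (𝒢.r γ)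
  actpInv : ∀ γ : G, P.Ep (𝒢.r γ) →L[ℂ] P.Ep (𝒢.s γ)
  actm : ∀ γ : G, P.Em (𝒢.s γ) →L[ℂ] P.Em (𝒢.r γ)
  actmInv : ∀ γ : G, P.Em (𝒢.r γ) →L[ℂ] P.Em (𝒢.s γ)
  actp_actpInv : ∀ γ e, actp γ (actpInv γ e) = e
  actpInv_actp : ∀ γ e, actpInv γ (actp γ e) = e
  actm_actmInv : ∀ γ e, actm γ (actmInv γ e) = e
  actmInv_actm : ∀ γ e, actmInv γ (actm γ e) = e
  isometric_p : ∀ γ e, ‖actp γ e‖ = ‖e‖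
  isometric_m : ∀ γ e, ‖actm γ e‖ = ‖e‖
  actp_rsmul : ∀ γ e a, actp γ (P.rsmul (𝒢.s γ) e a)
    = P.rsmul (𝒢.r γ) (actp γ e) (AB.act γ a)
  actm_lsmul : ∀ γ a e, actm γ (P.lsmul (𝒢.s γ) a e)
    = P.lsmul (𝒢.r γ) (AB.act γ a) (actm γ e)
  map_pairing : ∀ γ e f, P.pairing (𝒢.r γ) (actm γ e) (actp γ f)
    = AB.act γ (P.pairing (𝒢.s γ) e f)
  actp_mul : ∀ γ γ' (h : 𝒢.s γ = 𝒢.r γ') (e : P.Ep (𝒢.s γ')),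
    actp (𝒢.mul γ γ') (cast (congrArg P.Ep (𝒢.s_mul γ γ' h).symm) e)
      = cast (congrArg P.Ep (𝒢.r_mul γ γ' h).symm)
          (actp γ (cast (congrArg P.Ep h.symm) (actp γ' e)))
  actm_mul : ∀ γ γ' (h : 𝒢.s γ = 𝒢.r γ') (e : P.Em (𝒢.s γ')),
    actm (𝒢.mul γ γ') (cast (congrArg P.Em (𝒢.s_mul γ γ' h).symm) e)
      = cast (congrArg P.Em (𝒢.r_mul γ γ' h).symm)
          (actm γ (cast (congrArg P.Em h.symm) (actm γ' e)))
  sect_p : ∀ ξ ∈ pbSec 𝒢.s P.Ep P.Fp.Γ, (fun γ => actp γ (ξ γ)) ∈ pbSec 𝒢.r P.Ep P.Fp.Γ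
  sect_m : ∀ ξ ∈ pbSec 𝒢.s P.Em P.Fm.Γ, (fun γ => actm γ (ξ γ)) ∈ pbSec 𝒢.r P.Em P.Fm.Γ

end GFields

section GCycles

variable {X : Type u} [TopologicalSpace X]

/-- A Banach `A`-`B`-pair structure on a Banach `B`-pair `Q`: a left action of `A` on `Q^>`
and a right action of `A` on `Q^<` for which the `B`-valued pairing is `A`-balanced. -/
structure BCBimoduleData (𝔄 : BanachAlgFieldB.{u, v} X) {𝔅 : BanachAlgFieldB.{u, v} X}
    (Q : BanachPairB 𝔅) : Type (max u v) where
  lactB : ∀ x, 𝔄.A x →L[ℂ] Q.Ep x →L[ℂ] Q.Ep x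
  ractB : ∀ x, Q.Em x →L[ℂ] 𝔄.A x →L[ℂ] Q.Em x
  lactB_mul : ∀ x (a b : 𝔄.A x) f, lactB x (a * b) f = lactB x a (lactB x b f)
  ractB_mul : ∀ x f (a b : 𝔄.A x), ractB x (ractB x f a) b = ractB x f (a * b)
  norm_lactB : ∀ x (a : 𝔄.A x) f, ‖lactB x a f‖ ≤ ‖a‖ * ‖f‖
  norm_ractB : ∀ x f (a : 𝔄.A x), ‖ractB x f a‖ ≤ ‖f‖ * ‖a‖
  lactB_rsmul : ∀ x (a : 𝔄.A x) f (c : 𝔅.A x),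
    lactB x a (Q.rsmul x f c) = Q.rsmul x (lactB x a f) c
  ractB_lsmul : ∀ x (c : 𝔅.A x) f (a : 𝔄.A x),
    ractB x (Q.lsmul x c f) a = Q.lsmul x c (ractB x f a)
  balanced : ∀ x f (a : 𝔄.A x) g,
    Q.pairing x (ractB x f a) g = Q.pairing x f (lactB x a g)
  lactB_mem : ∀ {β ξ}, β ∈ 𝔄.F.Γ → ξ ∈ Q.Fp.Γ → (fun x => lactB x (β x) (ξ x)) ∈ Q.Fp.Γ
  ractB_mem : ∀ {ξ β}, ξ ∈ Q.Fm.Γ → β ∈ 𝔄.F.Γ → (fun x => ractB x (ξ x) (β x)) ∈ Q.Fm.Γ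

/-- A grading automorphism of a Banach pair. -/
structure PairGrading {𝔅 : BanachAlgFieldB.{u, v} X} (P : BanachPairB 𝔅) :
    Type (max u v) where
  gp : ∀ x, P.Ep x →L[ℂ] P.Ep x
  gm : ∀ x, P.Em x →L[ℂ] P.Em x
  gp_sq : ∀ x e, gp x (gp x e) = e
  gm_sq : ∀ x e, gm x (gm x e) = e
  norm_gp : ∀ x e, ‖gp x e‖ ≤ ‖e‖
  norm_gm : ∀ x e, ‖gm x e‖ ≤ ‖e‖
  gp_rsmul : ∀ x e a, gp x (P.rsmul x e a) = P.rsmul x (gp x e) a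
  gm_lsmul : ∀ x a e, gm x (P.lsmul x a e) = P.lsmul x a (gm x e)
  pairing_g : ∀ x e f, P.pairing x (gm x e) (gp x f) = P.pairing x e f
  sect_p : ∀ ξ ∈ P.Fp.Γ, (fun x => gp x (ξ x)) ∈ P.Fp.Γ
  sect_m : ∀ ξ ∈ P.Fm.Γ, (fun x => gm x (ξ x)) ∈ P.Fm.Γ

/-- Local compactness of a family of operators between the pullbacks `q*E`, `q*F` of two
Banach pairs along `q : Y → X` (e.g. `q = r : 𝒢 → 𝒢⁽⁰⁾`), with respect to the pulled-back
module structures: local approximability by finite sums of rank-one operators built from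
sections of the pullback fields. -/
def IsLocallyCompactAlong {Y : Type w} [TopologicalSpace Y] (q : Y → X)
    {𝔅 : BanachAlgFieldB.{u, v} X} (P Q : BanachPairB 𝔅)
    (Tp : ∀ y, P.Ep (q y) →L[ℂ] Q.Ep (q y)) (Tm : ∀ y, Q.Em (q y) →L[ℂ] P.Em (q y)) :
    Prop :=
  ∀ (y₀ : Y) (ε : ℝ), 0 < ε → ∃ V ∈ nhds y₀, ∃ n : ℕ,
    ∃ ξ : Fin n → ∀ y, P.Em (q y), ∃ η : Fin n → ∀ y, Q.Ep (q y),
      (∀ i, ξ i ∈ pbSec q P.Em P.Fm.Γ) ∧ (∀ i, η i ∈ pbSec q Q.Ep Q.Fp.Γ) ∧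
      ∀ y ∈ V, ‖Tp y - ∑ i, rankOneP P Q (q y) (ξ i y) (η i y)‖ ≤ ε ∧
               ‖Tm y - ∑ i, rankOneM P Q (q y) (ξ i y) (η i y)‖ ≤ ε

/-- Compactness of a family of operators between the pullbacks of two Banach pairs along
`q : Y → X`: global approximability by finite sums of rank-one operators built from sections
of the pullback fields vanishing at infinity. -/
def IsCompactAlong {Y : Type w} [TopologicalSpace Y] (q : Y → X)
    {𝔅 : BanachAlgFieldB.{u, v} X} (P Q : BanachPairB 𝔅)
    (Tp : ∀ y, P.Ep (q y) →L[ℂ] Q.Ep (q y)) (Tm : ∀ y, Q.Em (q y) →L[ℂ] P.Em (q y)) :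
    Prop :=
  ∀ ε : ℝ, 0 < ε → ∃ n : ℕ,
    ∃ ξ : Fin n → ∀ y, P.Em (q y), ∃ η : Fin n → ∀ y, Q.Ep (q y),
      (∀ i, ξ i ∈ pbSec₀ q P.Em P.Fm.Γ) ∧ (∀ i, η i ∈ pbSec₀ q Q.Ep Q.Fp.Γ) ∧
      ∀ y, ‖Tp y - ∑ i, rankOneP P Q (q y) (ξ i y) (η i y)‖ ≤ ε ∧
           ‖Tm y - ∑ i, rankOneM P Q (q y) (ξ i y) (η i y)‖ ≤ ε

end GCycles

section KKCycleDef

variable {G : Type u} {O : Type u} [TopologicalSpace G] [TopologicalSpace O]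

/-- The data of a candidate `KK^ban_𝒢`-cycle from `A` to `B`: a non-degenerate graded
`𝒢`-Banach `A`-`B`-pair `E` together with an odd bounded `B`-linear operator `T`. -/
structure KKCycle (𝒢 : TopGroupoid G O) (𝔄 𝔅 : BanachAlgFieldB.{u, v} O)
    (AA : AlgAction 𝒢 𝔄) (AB : AlgAction 𝒢 𝔅) : Type (max u (v + 1)) where
  P : BanachPairB 𝔅
  nondeg : P.Nondegenerate
  Aact : BCBimoduleData 𝔄 P
  Gact : PairAction 𝒢 AB P
  grading : PairGrading P
  /-- the action of `A` is even -/
  Aact_even_p : ∀ x a e, grading.gp x (Aact.lactB x a e) = Aact.lactB x a (grading.gp x e)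
  Aact_even_m : ∀ x e a, grading.gm x (Aact.ractB x e a) = Aact.ractB x (grading.gm x e) a
  /-- the action of `A` is equivariant -/
  Aact_equiv_p : ∀ γ a e, Gact.actp γ (Aact.lactB (𝒢.s γ) a e)
    = Aact.lactB (𝒢.r γ) (AA.act γ a) (Gact.actp γ e)
  Aact_equiv_m : ∀ γ e a, Gact.actm γ (Aact.ractB (𝒢.s γ) e a)
    = Aact.ractB (𝒢.r γ) (Gact.actm γ e) (AA.act γ a)
  /-- the grading is equivariant -/
  grading_equiv_p : ∀ γ e, grading.gp (𝒢.r γ) (Gact.actp γ e) = Gact.actp γ (grading.gp (𝒢.s γ) e)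
  grading_equiv_m : ∀ γ e, grading.gm (𝒢.r γ) (Gact.actm γ e) = Gact.actm γ (grading.gm (𝒢.s γ) e)
  T : OpFamily P P
  T_lin : T.IsLin
  T_bounded : T.IsBounded
  T_odd_p : ∀ x e, grading.gp x (T.Tp x e) = - T.Tp x (grading.gp x e)
  T_odd_m : ∀ x e, grading.gm x (T.Tm x e) = - T.Tm x (grading.gm x e)

namespace KKCycle

variable {𝒢 : TopGroupoid G O} {𝔄 𝔅 : BanachAlgFieldB.{u, v} O}
variable {AA : AlgAction 𝒢 𝔄} {AB : AlgAction 𝒢 𝔅}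

/-- The commutator `[π_A(a), T]` of a cycle, as an operator family. -/
noncomputable def commOp (c : KKCycle 𝒢 𝔄 𝔅 AA AB) (a : ∀ x, 𝔄.A x) :
    OpFamily c.P c.P :=
  ⟨fun x => (c.Aact.lactB x (a x)).comp (c.T.Tp x) - (c.T.Tp x).comp (c.Aact.lactB x (a x)),
   fun x => (c.T.Tm x).comp ((c.Aact.ractB x).flip (a x))
     - ((c.Aact.ractB x).flip (a x)).comp (c.T.Tm x)⟩

/-- The defect `π_A(a) (1 - T²)` of a cycle, as an operator family. -/
noncomputable def defectOp (c : KKCycle 𝒢 𝔄 𝔅 AA AB) (a : ∀ x, 𝔄.A x) :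
    OpFamily c.P c.P :=
  ⟨fun x => (c.Aact.lactB x (a x)).comp
      (ContinuousLinearMap.id ℂ (c.P.Ep x) - (c.T.Tp x).comp (c.T.Tp x)),
   fun x => (ContinuousLinearMap.id ℂ (c.P.Em x) - (c.T.Tm x).comp (c.T.Tm x)).comp
      ((c.Aact.ractB x).flip (a x))⟩

/-- The equivariance defect `π(ã) (V_E (s*T) V_E⁻¹ - r*T)` over `𝒢`, `>`-component. -/
noncomputable def equivDefectP (c : KKCycle 𝒢 𝔄 𝔅 AA AB) (a : ∀ γ, 𝔄.A (𝒢.r γ)) :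
    ∀ γ, c.P.Ep (𝒢.r γ) →L[ℂ] c.P.Ep (𝒢.r γ) :=
  fun γ => (c.Aact.lactB (𝒢.r γ) (a γ)).comp
    ((c.Gact.actp γ).comp ((c.T.Tp (𝒢.s γ)).comp (c.Gact.actpInv γ)) - c.T.Tp (𝒢.r γ))

/-- The equivariance defect, `<`-component. -/
noncomputable def equivDefectM (c : KKCycle 𝒢 𝔄 𝔅 AA AB) (a : ∀ γ, 𝔄.A (𝒢.r γ)) :
    ∀ γ, c.P.Em (𝒢.r γ) →L[ℂ] c.P.Em (𝒢.r γ) :=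
  fun γ => ((c.Gact.actm γ).comp ((c.T.Tm (𝒢.s γ)).comp (c.Gact.actmInv γ))
      - c.T.Tm (𝒢.r γ)).comp ((c.Aact.ractB (𝒢.r γ)).flip (a γ))

/-- `(E,T)` is a `KK^ban_𝒢`-cycle: the commutators `[π_A(a),T]` and defects `π_A(a)(1-T²)`
are locally compact for all `a ∈ Γ(X,A)`, and the equivariance defect
`π(ã)(V_E (s*T) V_E⁻¹ - r*T)` is locally compact in `K^loc_{r*B}(r*E)` for all
`ã ∈ Γ(𝒢, r*A)`. -/
def IsCycle (c : KKCycle 𝒢 𝔄 𝔅 AA AB) : Prop :=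
  (∀ a ∈ 𝔄.F.Γ, IsLocallyCompactOp (c.commOp a)) ∧
  (∀ a ∈ 𝔄.F.Γ, IsLocallyCompactOp (c.defectOp a)) ∧
  (∀ a ∈ pbSec 𝒢.r 𝔄.A 𝔄.F.Γ,
    IsLocallyCompactAlong 𝒢.r c.P c.P (c.equivDefectP a) (c.equivDefectM a))

end KKCycle

end KKCycleDef

/-! ## Statement 8: `KK^ban_𝒢`-cycles can be characterised using compact operators -/

/-! ## Auxiliary lemmas for Statement 8 -/

section AuxSections

variable {X : Type u} [TopologicalSpace X] {E : X → Type v}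
  [∀ x, NormedAddCommGroup (E x)] [∀ x, NormedSpace ℂ (E x)] [∀ x, CompleteSpace (E x)]
variable {Y : Type w} [TopologicalSpace Y]

lemma comp_mem_pbSec (F : USCField X E) (q : Y → X) {γ : ∀ x, E x} (hγ : γ ∈ F.Γ) :
    (fun y => γ (q y)) ∈ pbSec q E F.Γ := by
  intro y₀ ε hε
  exact ⟨γ, hγ, Set.univ, Filter.univ_mem, fun y _ => by simp [hε.le]⟩

lemma mem_Γ_of_mem_pbSec_id (F : USCField X E) {ξ : ∀ x, E x}
    (hξ : ξ ∈ pbSec (fun x => x) E F.Γ) : ξ ∈ F.Γ :=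
  F.locally_approx_mem ξ hξ

/-- Local boundedness of sections of a pullback field. -/
lemma pbSec_locBound (F : USCField X E) {q : Y → X} (hq : Continuous q)
    {ξ : ∀ y, E (q y)} (hξ : ξ ∈ pbSec q E F.Γ) (y₀ : Y) :
    ∃ V ∈ nhds y₀, ∃ C : ℝ, 0 ≤ C ∧ ∀ y ∈ V, ‖ξ y‖ ≤ C := by
  obtain ⟨γ, hγ, V, hV, happ⟩ := hξ y₀ 1 one_pos
  have husc := F.usc_norm γ hγ (q y₀)
  have h1 : ∀ᶠ x in nhds (q y₀), ‖γ x‖ < ‖γ (q y₀)‖ + 1 :=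
    husc (‖γ (q y₀)‖ + 1) (by linarith)
  have h2 : ∀ᶠ y in nhds y₀, ‖γ (q y)‖ < ‖γ (q y₀)‖ + 1 :=
    (hq.tendsto y₀).eventually h1
  refine ⟨V ∩ {y | ‖γ (q y)‖ < ‖γ (q y₀)‖ + 1}, Filter.inter_mem hV h2,
    ‖γ (q y₀)‖ + 2, by positivity, fun y hy => ?_⟩
  have := happ y hy.1
  have h3 : ‖γ (q y)‖ < ‖γ (q y₀)‖ + 1 := hy.2
  have h4 : ‖ξ y‖ ≤ ‖γ (q y)‖ + ‖ξ y - γ (q y)‖ := norm_le_norm_add_norm_sub' _ _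
  linarith

/-- `pbSec` is stable under multiplication by a continuous (complex-valued) function. -/
lemma pbSec_smul (F : USCField X E) {q : Y → X} (hq : Continuous q)
    {φ : Y → ℂ} (hφ : Continuous φ) {ξ : ∀ y, E (q y)} (hξ : ξ ∈ pbSec q E F.Γ) :
    (fun y => φ y • ξ y) ∈ pbSec q E F.Γ := by
  intro y₀ ε hε
  obtain ⟨V₀, hV₀, C, hC0, hCb⟩ := pbSec_locBound F hq hξ y₀
  set D : ℝ := ‖φ y₀‖ + 1 with hD
  have hD1 : (1:ℝ) ≤ D := by rw [hD]; linarith [norm_nonneg (φ y₀)]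
  have hDpos : (0:ℝ) < D := by linarith
  set ε₁ : ℝ := min (ε / (2 * D)) 1 with hε₁def
  have hε₁pos : 0 < ε₁ := lt_min (div_pos hε (by linarith)) one_pos
  obtain ⟨γ, hγ, V₁, hV₁, happ⟩ := hξ y₀ ε₁ hε₁pos
  have hcont : ∀ᶠ y in nhds y₀, ‖φ y - φ y₀‖ < min 1 (ε / (2 * (C + 2))) := by
    have : Filter.Tendsto (fun y => ‖φ y - φ y₀‖) (nhds y₀) (nhds ‖φ y₀ - φ y₀‖) :=
      ((hφ.sub continuous_const).norm).tendsto y₀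
    simp only [sub_self, norm_zero] at this
    exact this.eventually_lt_const (by positivity)
  refine ⟨fun x => φ y₀ • γ x, F.smul_mem _ hγ, V₀ ∩ V₁ ∩ {y | ‖φ y - φ y₀‖ < min 1 (ε / (2 * (C + 2)))},
    Filter.inter_mem (Filter.inter_mem hV₀ hV₁) hcont, fun y hy => ?_⟩
  obtain ⟨⟨hy0, hy1⟩, hy2⟩ := hy
  have hb : ‖ξ y‖ ≤ C := hCb y hy0
  have ha : ‖ξ y - γ (q y)‖ ≤ ε₁ := happ y hy1
  have hφy : ‖φ y‖ ≤ D := by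
    have : ‖φ y - φ y₀‖ < 1 := lt_of_lt_of_le hy2 (min_le_left _ _)
    have h4 : ‖φ y‖ ≤ ‖φ y₀‖ + ‖φ y - φ y₀‖ := norm_le_norm_add_norm_sub' _ _
    rw [hD]; linarith
  have hγy : ‖γ (q y)‖ ≤ C + 2 := by
    have h1 : ε₁ ≤ 1 := min_le_right _ _
    have h4 : ‖γ (q y)‖ ≤ ‖ξ y‖ + ‖γ (q y) - ξ y‖ := norm_le_norm_add_norm_sub' _ _
    rw [norm_sub_rev] at h4
    linarith
  have key : ‖φ y • ξ y - φ y₀ • γ (q y)‖ ≤ ‖φ y‖ * ‖ξ y - γ (q y)‖ + ‖φ y - φ y₀‖ * ‖γ (q y)‖ := by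
    have : φ y • ξ y - φ y₀ • γ (q y)
        = φ y • (ξ y - γ (q y)) + (φ y - φ y₀) • γ (q y) := by
      rw [smul_sub, sub_smul]; abel
    rw [this]
    refine (norm_add_le _ _).trans (le_of_eq ?_)
    rw [norm_smul, norm_smul]
  have h1 : ‖φ y‖ * ‖ξ y - γ (q y)‖ ≤ ε / 2 := by
    have hε₁le : ε₁ ≤ ε / (2 * D) := min_le_left _ _
    calc ‖φ y‖ * ‖ξ y - γ (q y)‖ ≤ D * (ε / (2 * D)) := by
          apply mul_le_mul hφy (ha.trans hε₁le) (norm_nonneg _) hDpos.le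
      _ = ε / 2 := by field_simp
  have h2 : ‖φ y - φ y₀‖ * ‖γ (q y)‖ ≤ ε / 2 := by
    have hle : ‖φ y - φ y₀‖ ≤ ε / (2 * (C + 2)) := (lt_of_lt_of_le hy2 (min_le_right _ _)).le
    have hC2 : (0:ℝ) < C + 2 := by linarith
    calc ‖φ y - φ y₀‖ * ‖γ (q y)‖ ≤ (ε / (2 * (C + 2))) * (C + 2) := by
          apply mul_le_mul hle hγy (norm_nonneg _) (by positivity)
      _ = ε / 2 := by field_simp
  linarith [key]

/-- `pbSec₀` from `pbSec` plus a compactly supported multiplier. -/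
lemma pbSec₀_smul (F : USCField X E) {q : Y → X} (hq : Continuous q)
    {φ : Y → ℝ} (hφ : Continuous φ) {Cs : Set Y} (hCs : IsCompact Cs)
    (hsupp : ∀ y, φ y ≠ 0 → y ∈ Cs)
    {ξ : ∀ y, E (q y)} (hξ : ξ ∈ pbSec q E F.Γ) :
    (fun y => (φ y : ℂ) • ξ y) ∈ pbSec₀ q E F.Γ := by
  refine ⟨pbSec_smul F hq (Complex.continuous_ofReal.comp hφ) hξ, fun ε hε => ?_⟩
  refine ⟨Cs, hCs, fun y hy => ?_⟩
  have : φ y = 0 := by by_contra h; exact hy (hsupp y h)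
  simp [this, hε.le]

end AuxSections
section AuxPartition

private lemma kk_sumprod (a : ℕ → ℝ) (m : ℕ) :
    ∑ j ∈ Finset.range m, a j * ∏ i ∈ Finset.range j, (1 - a i)
      = 1 - ∏ i ∈ Finset.range m, (1 - a i) := by
  induction m with
  | zero => simp
  | succ m ih =>
    rw [Finset.sum_range_succ, Finset.prod_range_succ, ih]
    ring

/-- A finite partition of unity subordinate to a family of neighbourhoods covering a compact
set, in a locally compact Hausdorff space. -/
lemma kk_exists_partition {Y : Type w} [TopologicalSpace Y] [LocallyCompactSpace Y] [T2Space Y]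
    {K : Set Y} (hK : IsCompact K) (V : Y → Set Y) (hV : ∀ y ∈ K, V y ∈ nhds y) :
    ∃ (m : ℕ) (t : Fin m → Y) (φ : Fin m → Y → ℝ),
      (∀ j, t j ∈ K) ∧ (∀ j, Continuous (φ j)) ∧ (∀ j y, 0 ≤ φ j y) ∧
      (∀ y, 0 ≤ ∑ j, φ j y) ∧ (∀ y, ∑ j, φ j y ≤ 1) ∧ (∀ y ∈ K, ∑ j, φ j y = 1) ∧
      (∀ j, ∃ C : Set Y, IsCompact C ∧ ∀ y, φ j y ≠ 0 → y ∈ C) ∧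
      (∀ j y, φ j y ≠ 0 → y ∈ V (t j)) := by
  classical
  have key : ∀ y : Y, ∃ N : Set Y,
      y ∈ K → (IsCompact N ∧ y ∈ interior N ∧ N ⊆ interior (V y)) := by
    intro y
    by_cases hy : y ∈ K
    · obtain ⟨N, hN1, hN2, hN3⟩ :=
        exists_compact_subset isOpen_interior (mem_interior_iff_mem_nhds.mpr (hV y hy))
      exact ⟨N, fun _ => ⟨hN1, hN2, hN3⟩⟩
    · exact ⟨∅, fun h => absurd h hy⟩
  choose N hN using key
  have hcover : K ⊆ ⋃ y ∈ K, interior (N y) := fun y hy =>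
    Set.mem_biUnion hy (hN y hy).2.1
  obtain ⟨s, hsK, hsfin, hscov⟩ :=
    hK.elim_finite_subcover_image (fun y (_ : y ∈ K) => isOpen_interior) hcover
  set sf : Finset Y := hsfin.toFinset with hsf
  have hsf_mem : ∀ y, y ∈ sf ↔ y ∈ s := fun y => hsfin.mem_toFinset
  set m : ℕ := sf.card with hm
  set e : Fin m → Y := fun j => ((sf.equivFin.symm j : { x // x ∈ sf }) : Y) with he
  have he_mem : ∀ j, e j ∈ K := fun j => hsK ((hsf_mem _).mp (sf.equivFin.symm j).2)
  have hury : ∀ j : Fin m, ∃ f : C(Y, ℝ), Set.EqOn f 1 (N (e j)) ∧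
      Set.EqOn f 0 (interior (V (e j)))ᶜ ∧ HasCompactSupport f ∧
      ∀ y, f y ∈ Set.Icc (0:ℝ) 1 := by
    intro j
    have hj := hN (e j) (he_mem j)
    exact exists_continuous_one_zero_of_isCompact hj.1 isOpen_interior.isClosed_compl
      (Set.disjoint_left.mpr fun y hy hy' => hy' (hj.2.2 hy))
  choose f hf1 hf0 hfc hf01 using hury
  set f' : ℕ → Y → ℝ := fun k y => if h : k < m then f ⟨k, h⟩ y else 0 with hf'
  have hf'cont : ∀ k, Continuous (f' k) := by
    intro k
    by_cases h : k < m
    · simpa only [hf', dif_pos h] using (f ⟨k, h⟩).continuous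
    · simp only [hf', dif_neg h]; exact continuous_const
  have hf'0 : ∀ k y, 0 ≤ f' k y := by
    intro k y
    by_cases h : k < m
    · simpa only [hf', dif_pos h] using (hf01 ⟨k, h⟩ y).1
    · simp [hf', dif_neg h]
  have hf'1 : ∀ k y, f' k y ≤ 1 := by
    intro k y
    by_cases h : k < m
    · simpa only [hf', dif_pos h] using (hf01 ⟨k, h⟩ y).2
    · simp [hf', dif_neg h]
  set φ : Fin m → Y → ℝ :=
    fun j y => f' j.val y * ∏ i ∈ Finset.range j.val, (1 - f' i y) with hφ
  have hsum : ∀ y, ∑ j, φ j y = 1 - ∏ i ∈ Finset.range m, (1 - f' i y) := by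
    intro y
    have := Fin.sum_univ_eq_sum_range (fun k => f' k y * ∏ i ∈ Finset.range k, (1 - f' i y)) m
    rw [hφ]
    rw [this, kk_sumprod]
  have hprod01 : ∀ (u : Finset ℕ) y, 0 ≤ ∏ i ∈ u, (1 - f' i y) ∧ ∏ i ∈ u, (1 - f' i y) ≤ 1 := by
    intro u y
    constructor
    · exact Finset.prod_nonneg fun i _ => by linarith [hf'1 i y]
    · exact Finset.prod_le_one (fun i _ => by linarith [hf'1 i y])
        (fun i _ => by linarith [hf'0 i y])
  refine ⟨m, e, φ, he_mem, ?_, ?_, ?_, ?_, ?_, ?_, ?_⟩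
  · intro j
    exact ((hf'cont j.val).mul (by continuity))
  · intro j y
    exact mul_nonneg (hf'0 _ _) (hprod01 _ y).1
  · intro y
    rw [hsum y]; linarith [(hprod01 (Finset.range m) y).2]
  · intro y
    rw [hsum y]; linarith [(hprod01 (Finset.range m) y).1]
  · intro y hy
    rw [hsum y]
    have : ∃ j : Fin m, f' j.val y = 1 := by
      obtain ⟨y', hy's, hyN⟩ := Set.mem_iUnion₂.mp (hscov hy)
      set j : Fin m := sf.equivFin ⟨y', (hsf_mem y').mpr hy's⟩ with hj
      have hej : e j = y' := by simp [he, hj]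
      refine ⟨j, ?_⟩
      have hyNj : y ∈ N (e j) := by rw [hej]; exact interior_subset hyN
      have : f j y = 1 := hf1 j hyNj
      simp only [hf', dif_pos j.isLt, Fin.eta]
      exact this
    obtain ⟨j, hj1⟩ := this
    have : ∏ i ∈ Finset.range m, (1 - f' i y) = 0 :=
      Finset.prod_eq_zero (Finset.mem_range.mpr j.isLt) (by rw [hj1]; ring)
    rw [this]; ring
  · intro j
    refine ⟨tsupport (f j), hfc j, fun y hyne => ?_⟩
    have hfne : f j y ≠ 0 := by
      intro h0
      apply hyne
      have : f' j.val y = 0 := by simp only [hf', dif_pos j.isLt, Fin.eta]; exact h0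
      rw [hφ]; simp [this]
    exact subset_tsupport _ hfne
  · intro j y hyne
    have hfne : f j y ≠ 0 := by
      intro h0
      apply hyne
      have : f' j.val y = 0 := by simp only [hf', dif_pos j.isLt, Fin.eta]; exact h0
      rw [hφ]; simp [this]
    have : y ∈ interior (V (e j)) := by
      by_contra hmem
      exact hfne (hf0 j hmem)
    exact interior_subset this

end AuxPartition
section AuxEstimate

lemma kk_estimate {Z : Type*} [NormedAddCommGroup Z] [NormedSpace ℂ Z]
    {m : ℕ} {ε : ℝ} (S : Fin m → Z) (T : Z) (φ : Fin m → ℝ)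
    (hφ0 : ∀ j, 0 ≤ φ j) (hs1 : ∑ j, φ j ≤ 1)
    (happrox : ∀ j, φ j ≠ 0 → ‖T - S j‖ ≤ ε / 2)
    (hTsmall : (∑ j, φ j = 1) ∨ ‖T‖ ≤ ε / 2)
    (hε : 0 < ε) :
    ‖T - ∑ j, (φ j : ℂ) • S j‖ ≤ ε := by
  set s : ℝ := ∑ j, φ j with hs
  have hsplit : ∑ j, (φ j : ℂ) • (T - S j)
      = ((s : ℝ) : ℂ) • T - ∑ j, (φ j : ℂ) • S j := by
    calc ∑ j, (φ j : ℂ) • (T - S j)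
        = ∑ j, ((φ j : ℂ) • T - (φ j : ℂ) • S j) := by
          refine Finset.sum_congr rfl fun j _ => ?_; rw [smul_sub]
      _ = (∑ j, (φ j : ℂ)) • T - ∑ j, (φ j : ℂ) • S j := by
          rw [Finset.sum_sub_distrib, Finset.sum_smul]
      _ = ((s : ℝ) : ℂ) • T - ∑ j, (φ j : ℂ) • S j := by
          rw [hs]; push_cast; ring_nf
  have key : T - ∑ j, (φ j : ℂ) • S j
      = ((1 - s : ℝ) : ℂ) • T + ∑ j, (φ j : ℂ) • (T - S j) := by
    rw [hsplit]
    push_cast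
    rw [sub_smul, one_smul]
    abel
  rw [key]
  have h1 : ‖((1 - s : ℝ) : ℂ) • T‖ ≤ ε / 2 := by
    rw [norm_smul, Complex.norm_real, Real.norm_eq_abs, abs_of_nonneg (by linarith)]
    rcases hTsmall with h | h
    · rw [h]
      simp
      positivity
    · have hT0 : (0:ℝ) ≤ ‖T‖ := norm_nonneg _
      have hs0 : 0 ≤ s := Finset.sum_nonneg fun j _ => hφ0 j
      nlinarith
  have h2 : ‖∑ j, (φ j : ℂ) • (T - S j)‖ ≤ ε / 2 := by
    refine (norm_sum_le _ _).trans ?_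
    have hb : ∀ j, ‖(φ j : ℂ) • (T - S j)‖ ≤ φ j * (ε / 2) := by
      intro j
      rw [norm_smul, Complex.norm_real, Real.norm_eq_abs, abs_of_nonneg (hφ0 j)]
      by_cases h : φ j = 0
      · simp [h]
      · exact mul_le_mul_of_nonneg_left (happrox j h) (hφ0 j)
    refine (Finset.sum_le_sum fun j _ => hb j).trans ?_
    rw [← Finset.sum_mul]
    have hs0 : 0 ≤ s := Finset.sum_nonneg fun j _ => hφ0 j
    rw [← hs]
    nlinarith
  calc ‖((1 - s : ℝ) : ℂ) • T + ∑ j, (φ j : ℂ) • (T - S j)‖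
      ≤ ‖((1 - s : ℝ) : ℂ) • T‖ + ‖∑ j, (φ j : ℂ) • (T - S j)‖ := norm_add_le _ _
    _ ≤ ε := by linarith

end AuxEstimate

section AuxRankOne

variable {X : Type u} [TopologicalSpace X] {𝔅 : BanachAlgFieldB.{u, v} X}

lemma kk_rankOneP_smul (P Q : BanachPairB 𝔅) (x : X) (c d : ℂ) (ξ : P.Em x) (η : Q.Ep x) :
    rankOneP P Q x (c • ξ) (d • η) = (c * d) • rankOneP P Q x ξ η := by
  ext e
  simp only [rankOneP, ContinuousLinearMap.comp_apply, map_smul,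
    ContinuousLinearMap.smul_apply, ContinuousLinearMap.coe_smul', Pi.smul_apply]
  rw [smul_smul, mul_comm]

lemma kk_rankOneM_smul (P Q : BanachPairB 𝔅) (x : X) (c d : ℂ) (ξ : P.Em x) (η : Q.Ep x) :
    rankOneM P Q x (c • ξ) (d • η) = (c * d) • rankOneM P Q x ξ η := by
  ext e
  simp only [rankOneM, ContinuousLinearMap.comp_apply, map_smul,
    ContinuousLinearMap.smul_apply, ContinuousLinearMap.flip_apply,
    ContinuousLinearMap.coe_smul', Pi.smul_apply]
  rw [smul_smul, mul_comm]

end AuxRankOne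

section AuxForward

variable {X : Type u} [TopologicalSpace X] {𝔅 : BanachAlgFieldB.{u, v} X}
variable {Y : Type u} [TopologicalSpace Y]

/-- Generic gluing lemma: a locally compact family of operators which is dominated by a
weight vanishing at infinity is globally approximable by rank-one operators built from
"vanishing" sections. -/
lemma kk_forward [LocallyCompactSpace Y] [T2Space Y]
    (P Q : BanachPairB 𝔅) (q : Y → X)
    (Tp : ∀ y, P.Ep (q y) →L[ℂ] Q.Ep (q y)) (Tm : ∀ y, Q.Em (q y) →L[ℂ] P.Em (q y))
    (Γm : Set (∀ y, P.Em (q y))) (Γp : Set (∀ y, Q.Ep (q y)))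
    (Γm₀ : Set (∀ y, P.Em (q y))) (Γp₀ : Set (∀ y, Q.Ep (q y)))
    (hsm : ∀ (φ : Y → ℝ), Continuous φ → (∃ C, IsCompact C ∧ ∀ y, φ y ≠ 0 → y ∈ C) →
      ∀ ξ ∈ Γm, (fun y => (φ y : ℂ) • ξ y) ∈ Γm₀)
    (hsp : ∀ (φ : Y → ℝ), Continuous φ → (∃ C, IsCompact C ∧ ∀ y, φ y ≠ 0 → y ∈ C) →
      ∀ η ∈ Γp, (fun y => (φ y : ℂ) • η y) ∈ Γp₀)
    (M : ℝ) (hM : 0 ≤ M) (w : Y → ℝ)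
    (hTp : ∀ y, ‖Tp y‖ ≤ M * w y) (hTm : ∀ y, ‖Tm y‖ ≤ M * w y)
    (hvan : ∀ δ : ℝ, 0 < δ → ∃ K : Set Y, IsCompact K ∧ ∀ y ∉ K, w y ≤ δ)
    (hloc : ∀ (y₀ : Y) (ε : ℝ), 0 < ε → ∃ V ∈ nhds y₀, ∃ n : ℕ,
      ∃ ξ : Fin n → ∀ y, P.Em (q y), ∃ η : Fin n → ∀ y, Q.Ep (q y),
        (∀ i, ξ i ∈ Γm) ∧ (∀ i, η i ∈ Γp) ∧
        ∀ y ∈ V, ‖Tp y - ∑ i, rankOneP P Q (q y) (ξ i y) (η i y)‖ ≤ ε ∧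
                 ‖Tm y - ∑ i, rankOneM P Q (q y) (ξ i y) (η i y)‖ ≤ ε) :
    ∀ ε : ℝ, 0 < ε → ∃ n : ℕ,
      ∃ ξ : Fin n → ∀ y, P.Em (q y), ∃ η : Fin n → ∀ y, Q.Ep (q y),
        (∀ i, ξ i ∈ Γm₀) ∧ (∀ i, η i ∈ Γp₀) ∧
        ∀ y, ‖Tp y - ∑ i, rankOneP P Q (q y) (ξ i y) (η i y)‖ ≤ ε ∧
             ‖Tm y - ∑ i, rankOneM P Q (q y) (ξ i y) (η i y)‖ ≤ ε := by
  classical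
  intro ε hε
  set δ : ℝ := ε / (2 * (M + 1)) with hδdef
  have hδ : 0 < δ := by rw [hδdef]; positivity
  have hMδ : M * δ ≤ ε / 2 := by
    rw [hδdef, mul_div_assoc']
    rw [div_le_div_iff₀ (by positivity) two_pos]
    nlinarith
  obtain ⟨K, hK, hKw⟩ := hvan δ hδ
  have h := fun y : Y => hloc y (ε / 2) (half_pos hε)
  choose V hVmem n ξ η hξ hη hest using h
  obtain ⟨m, t, φ, ht_mem, hφcont, hφ0, hφsum0, hφsum1, hφsumK, hφsupp, hφV⟩ :=
    kk_exists_partition hK V (fun y _ => hVmem y)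
  choose Csupp hCsupp hCsuppmem using hφsupp
  set K' : Set Y := ⋃ j, Csupp j with hK'
  have hK'c : IsCompact K' := isCompact_iUnion hCsupp
  obtain ⟨χ, hχ1, -, hχc, hχ01⟩ :=
    exists_continuous_one_zero_of_isCompact hK'c isClosed_empty (Set.disjoint_empty _)
  set σty : Type := Σ j : Fin m, Fin (n (t j)) with hσty
  set Nn : ℕ := Fintype.card σty with hNn
  set eqv : σty ≃ Fin Nn := Fintype.equivFin σty with heqv
  refine ⟨Nn,
    (fun k y => (χ y : ℂ) • ξ (t (eqv.symm k).1) (eqv.symm k).2 y),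
    (fun k y => ((φ (eqv.symm k).1 y : ℝ) : ℂ) • η (t (eqv.symm k).1) (eqv.symm k).2 y),
    ?_, ?_, ?_⟩
  · intro k
    exact hsm χ χ.continuous ⟨tsupport χ, hχc, fun y h => subset_tsupport _ h⟩
      _ (hξ (t (eqv.symm k).1) (eqv.symm k).2)
  · intro k
    exact hsp (φ (eqv.symm k).1) (hφcont _)
      ⟨Csupp (eqv.symm k).1, hCsupp _, fun y h => hCsuppmem _ y h⟩
      _ (hη (t (eqv.symm k).1) (eqv.symm k).2)
  · intro y
    have hscal : ∀ j : Fin m, ((χ y : ℝ) : ℂ) * ((φ j y : ℝ) : ℂ) = ((φ j y : ℝ) : ℂ) := by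
      intro j
      by_cases h : φ j y = 0
      · simp [h]
      · have hy' : y ∈ K' := Set.mem_iUnion.mpr ⟨j, hCsuppmem j y h⟩
        have : χ y = 1 := hχ1 hy'
        simp [this]
    have hsumP : (∑ k : Fin Nn, rankOneP P Q (q y)
          ((χ y : ℂ) • ξ (t (eqv.symm k).1) (eqv.symm k).2 y)
          (((φ (eqv.symm k).1 y : ℝ) : ℂ) • η (t (eqv.symm k).1) (eqv.symm k).2 y))
        = ∑ j, ((φ j y : ℝ) : ℂ) • ∑ i, rankOneP P Q (q y) (ξ (t j) i y) (η (t j) i y) := by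
      have e1 : (∑ k : Fin Nn, rankOneP P Q (q y)
            ((χ y : ℂ) • ξ (t (eqv.symm k).1) (eqv.symm k).2 y)
            (((φ (eqv.symm k).1 y : ℝ) : ℂ) • η (t (eqv.symm k).1) (eqv.symm k).2 y))
          = ∑ p : σty, rankOneP P Q (q y) ((χ y : ℂ) • ξ (t p.1) p.2 y)
              (((φ p.1 y : ℝ) : ℂ) • η (t p.1) p.2 y) :=
        Equiv.sum_comp eqv.symm (fun p : σty => rankOneP P Q (q y)
          ((χ y : ℂ) • ξ (t p.1) p.2 y) (((φ p.1 y : ℝ) : ℂ) • η (t p.1) p.2 y))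
      rw [e1, ← Finset.univ_sigma_univ, Finset.sum_sigma]
      refine Finset.sum_congr rfl fun j _ => ?_
      rw [Finset.smul_sum]
      refine Finset.sum_congr rfl fun i _ => ?_
      rw [kk_rankOneP_smul, hscal]
    have hsumM : (∑ k : Fin Nn, rankOneM P Q (q y)
          ((χ y : ℂ) • ξ (t (eqv.symm k).1) (eqv.symm k).2 y)
          (((φ (eqv.symm k).1 y : ℝ) : ℂ) • η (t (eqv.symm k).1) (eqv.symm k).2 y))
        = ∑ j, ((φ j y : ℝ) : ℂ) • ∑ i, rankOneM P Q (q y) (ξ (t j) i y) (η (t j) i y) := by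
      have e1 : (∑ k : Fin Nn, rankOneM P Q (q y)
            ((χ y : ℂ) • ξ (t (eqv.symm k).1) (eqv.symm k).2 y)
            (((φ (eqv.symm k).1 y : ℝ) : ℂ) • η (t (eqv.symm k).1) (eqv.symm k).2 y))
          = ∑ p : σty, rankOneM P Q (q y) ((χ y : ℂ) • ξ (t p.1) p.2 y)
              (((φ p.1 y : ℝ) : ℂ) • η (t p.1) p.2 y) :=
        Equiv.sum_comp eqv.symm (fun p : σty => rankOneM P Q (q y)
          ((χ y : ℂ) • ξ (t p.1) p.2 y) (((φ p.1 y : ℝ) : ℂ) • η (t p.1) p.2 y))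
      rw [e1, ← Finset.univ_sigma_univ, Finset.sum_sigma]
      refine Finset.sum_congr rfl fun j _ => ?_
      rw [Finset.smul_sum]
      refine Finset.sum_congr rfl fun i _ => ?_
      rw [kk_rankOneM_smul, hscal]
    have hTsmall : ∀ (Tnorm : ℝ), Tnorm ≤ M * w y → (∑ j, φ j y = 1) ∨ Tnorm ≤ ε / 2 := by
      intro Tnorm hTn
      by_cases hyK : y ∈ K
      · exact Or.inl (hφsumK y hyK)
      · exact Or.inr (hTn.trans (le_trans (mul_le_mul_of_nonneg_left (hKw y hyK) hM) hMδ))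
    constructor
    · rw [hsumP]
      exact kk_estimate _ (Tp y) (fun j => φ j y) (fun j => hφ0 j y) (hφsum1 y)
        (fun j hj => (hest (t j) y (hφV j y hj)).1) (hTsmall ‖Tp y‖ (hTp y)) hε
    · rw [hsumM]
      exact kk_estimate _ (Tm y) (fun j => φ j y) (fun j => hφ0 j y) (hφsum1 y)
        (fun j hj => (hest (t j) y (hφV j y hj)).2) (hTsmall ‖Tm y‖ (hTm y)) hε

end AuxForward
section AuxGamma

variable {X : Type u} [TopologicalSpace X] {E : X → Type v}
  [∀ x, NormedAddCommGroup (E x)] [∀ x, NormedSpace ℂ (E x)] [∀ x, CompleteSpace (E x)]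

lemma kk_Γ_smul (F : USCField X E) {φ : X → ℝ} (hφ : Continuous φ)
    {ξ : ∀ x, E x} (hξ : ξ ∈ F.Γ) : (fun x => (φ x : ℂ) • ξ x) ∈ F.Γ := by
  have h0 : (fun y => ξ ((fun x => x) y)) ∈ pbSec (fun x : X => x) E F.Γ :=
    comp_mem_pbSec F (fun x => x) hξ
  have h1 : (fun y => ((φ y : ℝ) : ℂ) • ξ y) ∈ pbSec (fun x : X => x) E F.Γ :=
    pbSec_smul F continuous_id (Complex.continuous_ofReal.comp hφ) h0
  exact F.locally_approx_mem _ h1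

lemma kk_Γ₀_smul (F : USCField X E) {φ : X → ℝ} (hφ : Continuous φ)
    {Cs : Set X} (hCs : IsCompact Cs) (hsupp : ∀ x, φ x ≠ 0 → x ∈ Cs)
    {ξ : ∀ x, E x} (hξ : ξ ∈ F.Γ) : (fun x => (φ x : ℂ) • ξ x) ∈ F.Γ₀ := by
  refine ⟨kk_Γ_smul F hφ hξ, fun ε hε => ⟨Cs, hCs, fun x hx => ?_⟩⟩
  have : φ x = 0 := by by_contra h; exact hx (hsupp x h)
  simp [this, hε.le]

/-- Cut-off functions equal to `1` near a point. -/
lemma kk_cutoff {Y : Type w} [TopologicalSpace Y] [LocallyCompactSpace Y] [T2Space Y]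
    (y₀ : Y) : ∃ (χ : C(Y, ℝ)) (U : Set Y), U ∈ nhds y₀ ∧ (∀ y ∈ U, χ y = 1) ∧
      HasCompactSupport χ := by
  obtain ⟨K, hK, hKn⟩ := exists_compact_mem_nhds y₀
  obtain ⟨χ, hχ1, -, hχc, -⟩ :=
    exists_continuous_one_zero_of_isCompact hK isClosed_empty (Set.disjoint_empty _)
  exact ⟨χ, K, hKn, fun y hy => hχ1 hy, hχc⟩

end AuxGamma

section AuxBounds

variable {G : Type u} {O : Type u} [TopologicalSpace G] [TopologicalSpace O]
variable {𝒢 : TopGroupoid G O} {𝔄 𝔅 : BanachAlgFieldB.{u, v} O}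
variable {AA : AlgAction 𝒢 𝔄} {AB : AlgAction 𝒢 𝔅}

lemma kk_lactB_norm (c : KKCycle 𝒢 𝔄 𝔅 AA AB) (x : O) (a : 𝔄.A x) :
    ‖c.Aact.lactB x a‖ ≤ ‖a‖ :=
  ContinuousLinearMap.opNorm_le_bound _ (norm_nonneg a) fun e => c.Aact.norm_lactB x a e

lemma kk_ractB_norm (c : KKCycle 𝒢 𝔄 𝔅 AA AB) (x : O) (a : 𝔄.A x) :
    ‖(c.Aact.ractB x).flip a‖ ≤ ‖a‖ :=
  ContinuousLinearMap.opNorm_le_bound _ (norm_nonneg a) fun e => by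
    rw [ContinuousLinearMap.flip_apply]
    exact (c.Aact.norm_ractB x e a).trans (le_of_eq (mul_comm _ _))

lemma kk_comm_bound (c : KKCycle 𝒢 𝔄 𝔅 AA AB) {C : ℝ} (hC0 : 0 ≤ C)
    (hC : ∀ x, ‖c.T.Tp x‖ ≤ C ∧ ‖c.T.Tm x‖ ≤ C) (a : ∀ x, 𝔄.A x) (x : O) :
    ‖(c.commOp a).Tp x‖ ≤ (2 * C) * ‖a x‖ ∧ ‖(c.commOp a).Tm x‖ ≤ (2 * C) * ‖a x‖ := by
  constructor
  · show ‖(c.Aact.lactB x (a x)).comp (c.T.Tp x)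
      - (c.T.Tp x).comp (c.Aact.lactB x (a x))‖ ≤ (2 * C) * ‖a x‖
    refine (norm_sub_le _ _).trans ?_
    have e1 : ‖(c.Aact.lactB x (a x)).comp (c.T.Tp x)‖ ≤ ‖a x‖ * C :=
      (ContinuousLinearMap.opNorm_comp_le _ _).trans
        (mul_le_mul (kk_lactB_norm c x (a x)) (hC x).1 (norm_nonneg _) (norm_nonneg _))
    have e2 : ‖(c.T.Tp x).comp (c.Aact.lactB x (a x))‖ ≤ C * ‖a x‖ :=
      (ContinuousLinearMap.opNorm_comp_le _ _).trans
        (mul_le_mul (hC x).1 (kk_lactB_norm c x (a x)) (norm_nonneg _) hC0)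
    nlinarith [norm_nonneg (a x)]
  · show ‖(c.T.Tm x).comp ((c.Aact.ractB x).flip (a x))
      - ((c.Aact.ractB x).flip (a x)).comp (c.T.Tm x)‖ ≤ (2 * C) * ‖a x‖
    refine (norm_sub_le _ _).trans ?_
    have e1 : ‖(c.T.Tm x).comp ((c.Aact.ractB x).flip (a x))‖ ≤ C * ‖a x‖ :=
      (ContinuousLinearMap.opNorm_comp_le _ _).trans
        (mul_le_mul (hC x).2 (kk_ractB_norm c x (a x)) (norm_nonneg _) hC0)
    have e2 : ‖((c.Aact.ractB x).flip (a x)).comp (c.T.Tm x)‖ ≤ ‖a x‖ * C :=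
      (ContinuousLinearMap.opNorm_comp_le _ _).trans
        (mul_le_mul (kk_ractB_norm c x (a x)) (hC x).2 (norm_nonneg _) (norm_nonneg _))
    nlinarith [norm_nonneg (a x)]

lemma kk_defect_bound (c : KKCycle 𝒢 𝔄 𝔅 AA AB) {C : ℝ} (hC0 : 0 ≤ C)
    (hC : ∀ x, ‖c.T.Tp x‖ ≤ C ∧ ‖c.T.Tm x‖ ≤ C) (a : ∀ x, 𝔄.A x) (x : O) :
    ‖(c.defectOp a).Tp x‖ ≤ (1 + C * C) * ‖a x‖ ∧
      ‖(c.defectOp a).Tm x‖ ≤ (1 + C * C) * ‖a x‖ := by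
  have hidp : ‖ContinuousLinearMap.id ℂ (c.P.Ep x)
      - (c.T.Tp x).comp (c.T.Tp x)‖ ≤ 1 + C * C := by
    refine (norm_sub_le _ _).trans ?_
    have e1 : ‖(c.T.Tp x).comp (c.T.Tp x)‖ ≤ C * C :=
      (ContinuousLinearMap.opNorm_comp_le _ _).trans
        (mul_le_mul (hC x).1 (hC x).1 (norm_nonneg _) hC0)
    have := ContinuousLinearMap.norm_id_le (E := c.P.Ep x) (𝕜 := ℂ)
    linarith
  have hidm : ‖ContinuousLinearMap.id ℂ (c.P.Em x)
      - (c.T.Tm x).comp (c.T.Tm x)‖ ≤ 1 + C * C := by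
    refine (norm_sub_le _ _).trans ?_
    have e1 : ‖(c.T.Tm x).comp (c.T.Tm x)‖ ≤ C * C :=
      (ContinuousLinearMap.opNorm_comp_le _ _).trans
        (mul_le_mul (hC x).2 (hC x).2 (norm_nonneg _) hC0)
    have := ContinuousLinearMap.norm_id_le (E := c.P.Em x) (𝕜 := ℂ)
    linarith
  constructor
  · show ‖(c.Aact.lactB x (a x)).comp
      (ContinuousLinearMap.id ℂ (c.P.Ep x) - (c.T.Tp x).comp (c.T.Tp x))‖ ≤ (1 + C * C) * ‖a x‖
    refine (ContinuousLinearMap.opNorm_comp_le _ _).trans ?_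
    have := mul_le_mul (kk_lactB_norm c x (a x)) hidp (norm_nonneg _) (norm_nonneg _)
    nlinarith [norm_nonneg (a x)]
  · show ‖(ContinuousLinearMap.id ℂ (c.P.Em x) - (c.T.Tm x).comp (c.T.Tm x)).comp
      ((c.Aact.ractB x).flip (a x))‖ ≤ (1 + C * C) * ‖a x‖
    refine (ContinuousLinearMap.opNorm_comp_le _ _).trans ?_
    have := mul_le_mul hidm (kk_ractB_norm c x (a x)) (norm_nonneg _) (by positivity)
    nlinarith [norm_nonneg (a x)]

lemma kk_equiv_bound (c : KKCycle 𝒢 𝔄 𝔅 AA AB) {C : ℝ} (hC0 : 0 ≤ C)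
    (hC : ∀ x, ‖c.T.Tp x‖ ≤ C ∧ ‖c.T.Tm x‖ ≤ C) (a : ∀ γ, 𝔄.A (𝒢.r γ)) (γ : G) :
    ‖c.equivDefectP a γ‖ ≤ (2 * C) * ‖a γ‖ ∧ ‖c.equivDefectM a γ‖ ≤ (2 * C) * ‖a γ‖ := by
  have hinv_p : ∀ e, ‖c.Gact.actpInv γ e‖ = ‖e‖ := by
    intro e
    rw [← c.Gact.isometric_p γ (c.Gact.actpInv γ e), c.Gact.actp_actpInv]
  have hinv_m : ∀ e, ‖c.Gact.actmInv γ e‖ = ‖e‖ := by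
    intro e
    rw [← c.Gact.isometric_m γ (c.Gact.actmInv γ e), c.Gact.actm_actmInv]
  have hconj_p : ‖(c.Gact.actp γ).comp ((c.T.Tp (𝒢.s γ)).comp (c.Gact.actpInv γ))‖ ≤ C := by
    refine ContinuousLinearMap.opNorm_le_bound _ hC0 fun e => ?_
    simp only [ContinuousLinearMap.comp_apply]
    rw [c.Gact.isometric_p]
    calc ‖c.T.Tp (𝒢.s γ) (c.Gact.actpInv γ e)‖
        ≤ ‖c.T.Tp (𝒢.s γ)‖ * ‖c.Gact.actpInv γ e‖ := ContinuousLinearMap.le_opNorm _ _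
      _ ≤ C * ‖e‖ := by
          rw [hinv_p]
          exact mul_le_mul_of_nonneg_right (hC _).1 (norm_nonneg _)
  have hconj_m : ‖(c.Gact.actm γ).comp ((c.T.Tm (𝒢.s γ)).comp (c.Gact.actmInv γ))‖ ≤ C := by
    refine ContinuousLinearMap.opNorm_le_bound _ hC0 fun e => ?_
    simp only [ContinuousLinearMap.comp_apply]
    rw [c.Gact.isometric_m]
    calc ‖c.T.Tm (𝒢.s γ) (c.Gact.actmInv γ e)‖
        ≤ ‖c.T.Tm (𝒢.s γ)‖ * ‖c.Gact.actmInv γ e‖ := ContinuousLinearMap.le_opNorm _ _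
      _ ≤ C * ‖e‖ := by
          rw [hinv_m]
          exact mul_le_mul_of_nonneg_right (hC _).2 (norm_nonneg _)
  have hsub_p : ‖(c.Gact.actp γ).comp ((c.T.Tp (𝒢.s γ)).comp (c.Gact.actpInv γ))
      - c.T.Tp (𝒢.r γ)‖ ≤ 2 * C := by
    refine (norm_sub_le _ _).trans ?_
    have := (hC (𝒢.r γ)).1
    linarith
  have hsub_m : ‖(c.Gact.actm γ).comp ((c.T.Tm (𝒢.s γ)).comp (c.Gact.actmInv γ))
      - c.T.Tm (𝒢.r γ)‖ ≤ 2 * C := by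
    refine (norm_sub_le _ _).trans ?_
    have := (hC (𝒢.r γ)).2
    linarith
  constructor
  · show ‖(c.Aact.lactB (𝒢.r γ) (a γ)).comp
      ((c.Gact.actp γ).comp ((c.T.Tp (𝒢.s γ)).comp (c.Gact.actpInv γ))
        - c.T.Tp (𝒢.r γ))‖ ≤ (2 * C) * ‖a γ‖
    refine (ContinuousLinearMap.opNorm_comp_le _ _).trans ?_
    have := mul_le_mul (kk_lactB_norm c (𝒢.r γ) (a γ)) hsub_p (norm_nonneg _) (norm_nonneg _)
    nlinarith [norm_nonneg (a γ)]
  · show ‖((c.Gact.actm γ).comp ((c.T.Tm (𝒢.s γ)).comp (c.Gact.actmInv γ))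
        - c.T.Tm (𝒢.r γ)).comp ((c.Aact.ractB (𝒢.r γ)).flip (a γ))‖ ≤ (2 * C) * ‖a γ‖
    refine (ContinuousLinearMap.opNorm_comp_le _ _).trans ?_
    have := mul_le_mul hsub_m (kk_ractB_norm c (𝒢.r γ) (a γ)) (norm_nonneg _) (by linarith)
    nlinarith [norm_nonneg (a γ)]

end AuxBounds
section Statement8

variable {G : Type u} {O : Type u} [TopologicalSpace G] [TopologicalSpace O]

/-- **Characterisation of `KK^ban_𝒢`-cycles by compact operators.**  Let `𝒢` be a locally
compact Hausdorff groupoid with open range and source maps, `A`, `B` `𝒢`-Banach algebras, `E`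
a non-degenerate graded `𝒢`-Banach `A`-`B`-pair and `T ∈ L_B(E)` odd.  Then `(E,T)` is a
`KK^ban_𝒢`-cycle (locally compact conditions with arbitrary sections) if and only if
`[π_A(a),T]` and `π_A(a)(1-T²)` are **compact** for all `a ∈ Γ₀(X,A)` and
`π(ã)(V_E (s*T) V_E⁻¹ - r*T) ∈ K_{r*B}(r*E)` for all `ã ∈ Γ₀(𝒢, r*A)`. -/
theorem cycle_iff_compact_conditions
    [LocallyCompactSpace G] [T2Space G] [LocallyCompactSpace O] [T2Space O]
    (𝒢 : TopGroupoid G O) (h𝒢 : 𝒢.OpenMaps)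
    (𝔄 𝔅 : BanachAlgFieldB.{u, v} O)
    (AA : AlgAction 𝒢 𝔄) (AB : AlgAction 𝒢 𝔅)
    (c : KKCycle 𝒢 𝔄 𝔅 AA AB) :
    c.IsCycle ↔
      ((∀ a ∈ 𝔄.F.Γ₀, IsCompactOp (c.commOp a)) ∧
       (∀ a ∈ 𝔄.F.Γ₀, IsCompactOp (c.defectOp a)) ∧
       (∀ a ∈ pbSec₀ 𝒢.r 𝔄.A 𝔄.F.Γ,
          IsCompactAlong 𝒢.r c.P c.P (c.equivDefectP a) (c.equivDefectM a))) := by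
  obtain ⟨C₀, hC₀⟩ := c.T_bounded
  set C : ℝ := max C₀ 0 with hCdef
  have hC0 : (0:ℝ) ≤ C := le_max_right _ _
  have hC : ∀ x, ‖c.T.Tp x‖ ≤ C ∧ ‖c.T.Tm x‖ ≤ C := fun x =>
    ⟨(hC₀ x).1.trans (le_max_left _ _), (hC₀ x).2.trans (le_max_left _ _)⟩
  constructor
  · rintro ⟨h1, h2, h3⟩
    refine ⟨?_, ?_, ?_⟩
    · intro a ha
      have hb := fun x => kk_comm_bound c hC0 hC a x
      exact kk_forward c.P c.P (fun x => x) (c.commOp a).Tp (c.commOp a).Tm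
        c.P.Fm.Γ c.P.Fp.Γ c.P.Fm.Γ₀ c.P.Fp.Γ₀
        (by rintro φ hφ ⟨Cs, hCs, hmem⟩ ξ hξ
            exact kk_Γ₀_smul c.P.Fm hφ hCs hmem hξ)
        (by rintro φ hφ ⟨Cs, hCs, hmem⟩ ηs hηs
            exact kk_Γ₀_smul c.P.Fp hφ hCs hmem hηs)
        (2 * C) (by positivity) (fun x => ‖a x‖)
        (fun x => (hb x).1) (fun x => (hb x).2)
        (fun δ hδ => ha.2 δ hδ)
        (h1 a ha.1)
    · intro a ha
      have hb := fun x => kk_defect_bound c hC0 hC a x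
      exact kk_forward c.P c.P (fun x => x) (c.defectOp a).Tp (c.defectOp a).Tm
        c.P.Fm.Γ c.P.Fp.Γ c.P.Fm.Γ₀ c.P.Fp.Γ₀
        (by rintro φ hφ ⟨Cs, hCs, hmem⟩ ξ hξ
            exact kk_Γ₀_smul c.P.Fm hφ hCs hmem hξ)
        (by rintro φ hφ ⟨Cs, hCs, hmem⟩ ηs hηs
            exact kk_Γ₀_smul c.P.Fp hφ hCs hmem hηs)
        (1 + C * C) (by positivity) (fun x => ‖a x‖)
        (fun x => (hb x).1) (fun x => (hb x).2)
        (fun δ hδ => ha.2 δ hδ)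
        (h2 a ha.1)
    · intro a ha
      have hb := fun γ => kk_equiv_bound c hC0 hC a γ
      exact kk_forward c.P c.P 𝒢.r (c.equivDefectP a) (c.equivDefectM a)
        (pbSec 𝒢.r c.P.Em c.P.Fm.Γ) (pbSec 𝒢.r c.P.Ep c.P.Fp.Γ)
        (pbSec₀ 𝒢.r c.P.Em c.P.Fm.Γ) (pbSec₀ 𝒢.r c.P.Ep c.P.Fp.Γ)
        (by rintro φ hφ ⟨Cs, hCs, hmem⟩ ξ hξ
            exact pbSec₀_smul c.P.Fm 𝒢.continuous_r hφ hCs hmem hξ)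
        (by rintro φ hφ ⟨Cs, hCs, hmem⟩ ηs hηs
            exact pbSec₀_smul c.P.Fp 𝒢.continuous_r hφ hCs hmem hηs)
        (2 * C) (by positivity) (fun γ => ‖a γ‖)
        (fun γ => (hb γ).1) (fun γ => (hb γ).2)
        (fun δ hδ => ha.2 δ hδ)
        (h3 a ha.1)
  · rintro ⟨h1, h2, h3⟩
    refine ⟨?_, ?_, ?_⟩
    · intro a ha x₀ ε hε
      obtain ⟨χ, U, hU, hχ1, hχc⟩ := kk_cutoff x₀
      have ha' : (fun x => (χ x : ℂ) • a x) ∈ 𝔄.F.Γ₀ :=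
        kk_Γ₀_smul 𝔄.F χ.continuous hχc (fun x hx => subset_tsupport _ hx) ha
      obtain ⟨n, ξ, η, hξ, hη, hbnd⟩ := h1 _ ha' ε hε
      refine ⟨U, hU, n, ξ, η, fun i => (hξ i).1, fun i => (hη i).1, fun x hx => ?_⟩
      have h1x : ((χ x : ℝ) : ℂ) • a x = a x := by rw [hχ1 x hx]; simp
      have hTpeq : (c.commOp a).Tp x = (c.commOp (fun x => (χ x : ℂ) • a x)).Tp x := by
        simp only [KKCycle.commOp, h1x]
      have hTmeq : (c.commOp a).Tm x = (c.commOp (fun x => (χ x : ℂ) • a x)).Tm x := by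
        simp only [KKCycle.commOp, h1x]
      rw [hTpeq, hTmeq]
      exact hbnd x
    · intro a ha x₀ ε hε
      obtain ⟨χ, U, hU, hχ1, hχc⟩ := kk_cutoff x₀
      have ha' : (fun x => (χ x : ℂ) • a x) ∈ 𝔄.F.Γ₀ :=
        kk_Γ₀_smul 𝔄.F χ.continuous hχc (fun x hx => subset_tsupport _ hx) ha
      obtain ⟨n, ξ, η, hξ, hη, hbnd⟩ := h2 _ ha' ε hε
      refine ⟨U, hU, n, ξ, η, fun i => (hξ i).1, fun i => (hη i).1, fun x hx => ?_⟩
      have h1x : ((χ x : ℝ) : ℂ) • a x = a x := by rw [hχ1 x hx]; simp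
      have hTpeq : (c.defectOp a).Tp x = (c.defectOp (fun x => (χ x : ℂ) • a x)).Tp x := by
        simp only [KKCycle.defectOp, h1x]
      have hTmeq : (c.defectOp a).Tm x = (c.defectOp (fun x => (χ x : ℂ) • a x)).Tm x := by
        simp only [KKCycle.defectOp, h1x]
      rw [hTpeq, hTmeq]
      exact hbnd x
    · intro a ha γ₀ ε hε
      obtain ⟨χ, U, hU, hχ1, hχc⟩ := kk_cutoff γ₀
      have ha' : (fun γ => (χ γ : ℂ) • a γ) ∈ pbSec₀ 𝒢.r 𝔄.A 𝔄.F.Γ :=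
        pbSec₀_smul 𝔄.F 𝒢.continuous_r χ.continuous hχc
          (fun γ hγ => subset_tsupport _ hγ) ha
      obtain ⟨n, ξ, η, hξ, hη, hbnd⟩ := h3 _ ha' ε hε
      refine ⟨U, hU, n, ξ, η, fun i => (hξ i).1, fun i => (hη i).1, fun γ hγ => ?_⟩
      have h1x : ((χ γ : ℝ) : ℂ) • a γ = a γ := by rw [hχ1 γ hγ]; simp
      have hPeq : c.equivDefectP a γ = c.equivDefectP (fun γ => (χ γ : ℂ) • a γ) γ := by
        simp only [KKCycle.equivDefectP, h1x]
      have hMeq : c.equivDefectM a γ = c.equivDefectM (fun γ => (χ γ : ℂ) • a γ) γ := by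
        simp only [KKCycle.equivDefectM, h1x]
      rw [hPeq, hMeq]
      exact hbnd γ

end Statement8
end

section
/- Let p: Y → X be a continuous, open and surjective map between locally compact Hausdorff spaces such that there exists a faithful continuous field of measures on Y over X with coefficient map p, and let G be a locally compact Hausdorff groupoid with open range and source maps over X. Then p_! is a functor from the category of p*(G)-Banach spaces with bounded Y ×_X Y-equivariant continuous fields of linear maps to the category of G-Banach spaces with bounded continuous fields of linear maps, isometric on morphisms (‖p_!T‖ = ‖T‖), sending p*(G)-equivariant fields to G-equivariant fields and compatible with tensor products, and it inverts p*: the maps I^E_y: (p*p_!E)_y = (p_!E)_{p(y)} → E_y, (e_z)_{z∈Y_{p(y)}} ↦ e_y, form a natural multiplicative p*(G)-equivariant isometric isomorphism p*p_!E ≅ E, and the maps J^E_x: (p_!p*E)_x → E_x, (e)_{y∈Y_x} ↦ e, form a natural multiplicative G-equivariant isometric isomorphism p_!p*E ≅ E. -/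
universe u v w x y z

/-! ## Groupoid actions on fields of Banach spaces; the functor `p_!` -/

section GSpace

variable {G : Type u} {O : Type u} [TopologicalSpace G] [TopologicalSpace O]

/-- An action of a topological groupoid `𝒢` on a u.s.c. field of Banach spaces over
`O = 𝒢⁽⁰⁾`, making it a `𝒢`-Banach space. -/
structure SpaceAction (𝒢 : TopGroupoid G O) (𝔈 : BanachSpaceFieldB.{u, v} O) :
    Type (max u v) where
  act : ∀ γ : G, 𝔈.E (𝒢.s γ) →L[ℂ] 𝔈.E (𝒢.r γ)
  actInv : ∀ γ : G, 𝔈.E (𝒢.r γ) →L[ℂ] 𝔈.E (𝒢.s γ)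
  act_actInv : ∀ γ e, act γ (actInv γ e) = e
  actInv_act : ∀ γ e, actInv γ (act γ e) = e
  isometric : ∀ γ e, ‖act γ e‖ = ‖e‖
  act_mul : ∀ γ γ' (h : 𝒢.s γ = 𝒢.r γ') (e : 𝔈.E (𝒢.s γ')),
    act (𝒢.mul γ γ') (cast (congrArg 𝔈.E (𝒢.s_mul γ γ' h).symm) e)
      = cast (congrArg 𝔈.E (𝒢.r_mul γ γ' h).symm)
          (act γ (cast (congrArg 𝔈.E h.symm) (act γ' e)))
  sect : ∀ ξ ∈ pbSec 𝒢.s 𝔈.E 𝔈.F.Γ, (fun γ => act γ (ξ γ)) ∈ pbSec 𝒢.r 𝔈.E 𝔈.F.Γ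

/-- A continuous field of linear maps between u.s.c. fields of Banach spaces. -/
structure IsLinField (𝔈 𝔉 : BanachSpaceFieldB.{u, v} O)
    (T : ∀ x, 𝔈.E x →L[ℂ] 𝔉.E x) : Prop where
  maps_sections : ∀ ξ ∈ 𝔈.F.Γ, (fun x => T x (ξ x)) ∈ 𝔉.F.Γ
  locally_bounded : ∀ x₀ : O, ∃ U ∈ nhds x₀, ∃ C : ℝ, ∀ x ∈ U, ‖T x‖ ≤ C

/-- Equivariance of a field of linear maps between `𝒢`-Banach spaces. -/
def IsEquivariantField {𝒢 : TopGroupoid G O} {𝔈 𝔉 : BanachSpaceFieldB.{u, v} O}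
    (αE : SpaceAction 𝒢 𝔈) (αF : SpaceAction 𝒢 𝔉)
    (T : ∀ x, 𝔈.E x →L[ℂ] 𝔉.E x) : Prop :=
  ∀ γ e, αF.act γ (T (𝒢.s γ) e) = T (𝒢.r γ) (αE.act γ e)

end GSpace

section PShriek

variable {G : Type u} {O : Type u} {Y : Type u}
variable [TopologicalSpace G] [TopologicalSpace O] [TopologicalSpace Y]

/-- A continuous field of measures on `Y` over `X` with coefficient map `p`. -/
structure ContFieldOfMeasures [MeasurableSpace Y] (p : Y → O) : Type u where
  μ : O → MeasureTheory.Measure Y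
  supp_le : ∀ x, μ x ((p ⁻¹' {x})ᶜ) = 0
  integrable : ∀ φ : C(Y, ℝ), HasCompactSupport φ →
    ∀ x, MeasureTheory.Integrable φ (μ x)
  cont : ∀ φ : C(Y, ℝ), HasCompactSupport φ →
    Continuous (fun x => ∫ y, φ y ∂(μ x)) ∧
    HasCompactSupport (fun x => ∫ y, φ y ∂(μ x))

/-- Faithfulness: every fibre `Y_x` is the support of `μ_x`. -/
def ContFieldOfMeasures.Faithful [MeasurableSpace Y] {p : Y → O}
    (m : ContFieldOfMeasures p) : Prop :=
  ∀ (x : O) (V : Set Y), IsOpen V → (V ∩ p ⁻¹' {x}).Nonempty → 0 < m.μ x V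

variable {𝒢 : TopGroupoid G O} {p : Y → O}

/-- For a `p*(𝒢)`-Banach space, equivariance of a field of operators under the closed
subgroupoid `Y ×_X Y ⊆ p*(𝒢)` (the elements whose middle component is a unit). -/
def IsYxYEquivariant {PB : TopGroupoid (PullbackCarrier 𝒢 p) Y}
    {𝔈 𝔉 : BanachSpaceFieldB.{u, v} Y}
    (αE : SpaceAction PB 𝔈) (αF : SpaceAction PB 𝔉)
    (T : ∀ y, 𝔈.E y →L[ℂ] 𝔉.E y) : Prop :=
  ∀ t : PullbackCarrier 𝒢 p, t.1.2.1 = 𝒢.unit (p t.1.1) →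
    ∀ e, αF.act t (T (PB.s t) e) = T (PB.r t) (αE.act t e)

/-- A realisation of the `𝒢`-Banach space `p_!𝔈Y` associated with a `p*(𝒢)`-Banach space
`𝔈Y`: the fibre of `p_!𝔈Y` over `x` is the space of `Y ×_X Y`-invariant families
`(e_y)_{y ∈ Y_x}` (with the sup-norm, which equals the norm of each component), realised
through the component maps `comp`. -/
structure PShriekSpace (PB : TopGroupoid (PullbackCarrier 𝒢 p) Y)
    (hPB : IsPullbackGroupoid 𝒢 p PB)
    (𝔈Y : BanachSpaceFieldB.{u, v} Y) (αY : SpaceAction PB 𝔈Y)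
    (𝔈X : BanachSpaceFieldB.{u, v} O) (αX : SpaceAction 𝒢 𝔈X) :
    Type (max u v) where
  comp : ∀ (x : O) (_ : 𝔈X.E x) (y : Y), p y = x → 𝔈Y.E y
  comp_add : ∀ x v w y hy, comp x (v + w) y hy = comp x v y hy + comp x w y hy
  comp_smul : ∀ (x) (c : ℂ) (v) (y) (hy), comp x (c • v) y hy = c • comp x v y hy
  comp_norm : ∀ x v y hy, ‖comp x v y hy‖ = ‖v‖
  comp_invariant : ∀ (t : PullbackCarrier 𝒢 p) (h : t.1.2.1 = 𝒢.unit (p t.1.1))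
      (v : 𝔈X.E (p t.1.2.2)),
    αY.act t (cast (congrArg 𝔈Y.E (hPB.s_eq t).symm) (comp (p t.1.2.2) v t.1.2.2 rfl))
      = cast (congrArg 𝔈Y.E (hPB.r_eq t).symm)
          (comp (p t.1.2.2) v t.1.1
            ((𝒢.s_unit (p t.1.1)).symm.trans ((congrArg 𝒢.s h.symm).trans t.2.2)))
  comp_inj : ∀ (x) (v w : 𝔈X.E x),
    (∀ y hy, comp x v y hy = comp x w y hy) → v = w
  comp_surj : ∀ (x : O) (e : ∀ y : Y, p y = x → 𝔈Y.E y),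
    (∀ (t : PullbackCarrier 𝒢 p) (_ : t.1.2.1 = 𝒢.unit (p t.1.1))
       (hz : p t.1.1 = x) (hy : p t.1.2.2 = x),
      αY.act t (cast (congrArg 𝔈Y.E (hPB.s_eq t).symm) (e t.1.2.2 hy))
        = cast (congrArg 𝔈Y.E (hPB.r_eq t).symm) (e t.1.1 hz)) →
    ∃ v : 𝔈X.E x, ∀ y hy, comp x v y hy = e y hy
  /-- the sections of `p_!𝔈Y` correspond to the `Y ×_X Y`-invariant sections of `𝔈Y` -/
  sections : ∀ ζ : ∀ x, 𝔈X.E x, ζ ∈ 𝔈X.F.Γ ↔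
    ∃ δ ∈ 𝔈Y.F.Γ, ∀ y : Y, comp (p y) (ζ (p y)) y rfl = δ y
  /-- the defining relation for the `𝒢`-action `p_!α` -/
  act_comp : ∀ (γ : G) (v : 𝔈X.E (𝒢.s γ)) (z y : Y) (hz : p z = 𝒢.r γ)
      (hy : p y = 𝒢.s γ),
    comp (𝒢.r γ) (αX.act γ v) z hz
      = cast (congrArg 𝔈Y.E (hPB.r_eq ⟨(z, γ, y), hz, hy.symm⟩))
          (αY.act ⟨(z, γ, y), hz, hy.symm⟩
            (cast (congrArg 𝔈Y.E (hPB.s_eq ⟨(z, γ, y), hz, hy.symm⟩).symm)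
              (comp (𝒢.s γ) v y hy)))

end PShriek

/-! ## Statement 12: the functor `p_!` inverts `p*` -/

section Statement12

variable {G : Type u} {O : Type u} {Y : Type u}
variable [TopologicalSpace G] [TopologicalSpace O] [TopologicalSpace Y]

/-- `𝔈Y` is (a realisation of) the pullback `p*𝔈` of a `𝒢`-Banach space `𝔈` along
`p : Y → 𝒢⁽⁰⁾`, with its canonical `p*(𝒢)`-action. -/
structure SpacePullbackData {𝒢 : TopGroupoid G O} {p : Y → O}
    (PB : TopGroupoid (PullbackCarrier 𝒢 p) Y) (hPB : IsPullbackGroupoid 𝒢 p PB)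
    (𝔈 : BanachSpaceFieldB.{u, v} O) (αE : SpaceAction 𝒢 𝔈)
    (𝔈Y : BanachSpaceFieldB.{u, v} Y) (αY : SpaceAction PB 𝔈Y) : Type (max u v) where
  eEq : ∀ y, 𝔈.E (p y) ≃ₗᵢ[ℂ] 𝔈Y.E y
  sections : ∀ ξ : ∀ y, 𝔈.E (p y),
    ξ ∈ pbSec p 𝔈.E 𝔈.F.Γ ↔ ((fun y => eEq y (ξ y)) ∈ 𝔈Y.F.Γ)
  equivariant : ∀ (t : PullbackCarrier 𝒢 p) (e : 𝔈.E (𝒢.s t.1.2.1)),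
    αY.act t (cast (congrArg 𝔈Y.E (hPB.s_eq t).symm)
        (eEq t.1.2.2 (cast (congrArg 𝔈.E t.2.2) e)))
      = cast (congrArg 𝔈Y.E (hPB.r_eq t).symm)
          (eEq t.1.1 (cast (congrArg 𝔈.E t.2.1.symm) (αE.act t.1.2.1 e)))

/-! ### Auxiliary lemmas for the proof -/

section AuxCast

theorem aux_cast_self {A : Sort x} (h : A = A) (a : A) : cast h a = a :=
  eq_of_heq (cast_heq h a)

variable {X : Type x}

theorem aux_tr_comm {E F : X → Type y} (f : ∀ x, E x → F x) {a b : X} (h : a = b) (e : E a) :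
    cast (congrArg F h) (f a e) = f b (cast (congrArg E h) e) := by subst h; rfl

theorem aux_tr_norm {E : X → Type y} [∀ x, Norm (E x)] {a b : X} (h : a = b) (e : E a) :
    ‖cast (congrArg E h) e‖ = ‖e‖ := by subst h; rfl

theorem aux_tr_add {E : X → Type y} [∀ x, Add (E x)] {a b : X} (h : a = b) (u v : E a) :
    cast (congrArg E h) (u + v) = cast (congrArg E h) u + cast (congrArg E h) v := by
  subst h; rfl

theorem aux_tr_smul {E : X → Type y} [∀ x, SMul ℂ (E x)] (c : ℂ) {a b : X} (h : a = b)
    (u : E a) : cast (congrArg E h) (c • u) = c • cast (congrArg E h) u := by subst h; rfl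

end AuxCast

section AuxAction

variable {G : Type u} {O : Type u} [TopologicalSpace G] [TopologicalSpace O]
variable {𝒢 : TopGroupoid G O} {𝔈 : BanachSpaceFieldB.{u, v} O}

theorem aux_act_congr (α : SpaceAction 𝒢 𝔈) {γ γ' : G} (h : γ = γ')
    {e : 𝔈.E (𝒢.s γ)} {e' : 𝔈.E (𝒢.s γ')} (he : HEq e e') :
    HEq (α.act γ e) (α.act γ' e') := by
  subst h; rw [eq_of_heq he]

theorem aux_act_injective (α : SpaceAction 𝒢 𝔈) (γ : G) :
    Function.Injective (α.act γ) :=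
  Function.LeftInverse.injective (α.actInv_act γ)

/-- For an idempotent arrow (e.g. a unit), the action is the canonical transport. -/
theorem aux_act_idem (α : SpaceAction 𝒢 𝔈) {γ : G} (hmul : 𝒢.mul γ γ = γ)
    (h : 𝒢.s γ = 𝒢.r γ) (e : 𝔈.E (𝒢.s γ)) :
    α.act γ e = cast (congrArg 𝔈.E h) e := by
  have h1 : α.act γ e = α.act γ (cast (congrArg 𝔈.E h.symm) (α.act γ e)) := by
    refine eq_of_heq (((aux_act_congr α hmul.symm (cast_heq _ _).symm).trans
      (heq_of_eq (α.act_mul γ γ h e))).trans (cast_heq _ _))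
  have h2 := aux_act_injective α γ h1
  calc α.act γ e
      = cast (congrArg 𝔈.E h) (cast (congrArg 𝔈.E h.symm) (α.act γ e)) := by
        rw [cast_cast, aux_cast_self]
    _ = cast (congrArg 𝔈.E h) e := by rw [← h2]

end AuxAction

section AuxAmap

variable {G : Type u} {O : Type u} {Y : Type u}
variable [TopologicalSpace G] [TopologicalSpace O] [TopologicalSpace Y]
variable {𝒢 : TopGroupoid G O} {p : Y → O}
variable {PB : TopGroupoid (PullbackCarrier 𝒢 p) Y}

/-- The action of `t : p*(𝒢)` realised as a map `𝔉.E t.1.2.2 → 𝔉.E t.1.1`. -/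
def Amap (hPB : IsPullbackGroupoid 𝒢 p PB) {𝔉 : BanachSpaceFieldB.{u, v} Y}
    (β : SpaceAction PB 𝔉) (t : PullbackCarrier 𝒢 p) (e : 𝔉.E t.1.2.2) : 𝔉.E t.1.1 :=
  cast (congrArg 𝔉.E (hPB.r_eq t))
    (β.act t (cast (congrArg 𝔉.E (hPB.s_eq t).symm) e))

variable (hPB : IsPullbackGroupoid 𝒢 p PB) {𝔉 : BanachSpaceFieldB.{u, v} Y}
variable (β : SpaceAction PB 𝔉)

theorem Amap_congr {t t' : PullbackCarrier 𝒢 p} (h : t = t')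
    {e : 𝔉.E t.1.2.2} {e' : 𝔉.E t'.1.2.2} (he : HEq e e') :
    HEq (Amap hPB β t e) (Amap hPB β t' e') := by
  subst h; rw [eq_of_heq he]

theorem Amap_mul {z w y : Y} {γ γ' : G} (pzr : p z = 𝒢.r γ) (psw : 𝒢.s γ = p w)
    (pwr : p w = 𝒢.r γ') (psy : 𝒢.s γ' = p y) (e : 𝔉.E y) :
    Amap hPB β ⟨(z, γ, w), pzr, psw⟩ (Amap hPB β ⟨(w, γ', y), pwr, psy⟩ e)
      = Amap hPB β ⟨(z, 𝒢.mul γ γ', y),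
          pzr.trans (𝒢.r_mul γ γ' (psw.trans pwr)).symm,
          (𝒢.s_mul γ γ' (psw.trans pwr)).trans psy⟩ e := by
  set t : PullbackCarrier 𝒢 p := ⟨(z, γ, w), pzr, psw⟩ with ht
  set t' : PullbackCarrier 𝒢 p := ⟨(w, γ', y), pwr, psy⟩ with ht'
  set u' : PullbackCarrier 𝒢 p := ⟨(z, 𝒢.mul γ γ', y),
      pzr.trans (𝒢.r_mul γ γ' (psw.trans pwr)).symm,
      (𝒢.s_mul γ γ' (psw.trans pwr)).trans psy⟩ with hu'
  have h : PB.s t = PB.r t' := by rw [hPB.s_eq, hPB.r_eq]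
  have hu : PB.mul t t' = u' := Subtype.ext (hPB.mul_eq t t' rfl)
  set e₀ : 𝔉.E (PB.s t') := cast (congrArg 𝔉.E (hPB.s_eq t').symm) e with he₀
  have hm := β.act_mul t t' h e₀
  have inner : cast (congrArg 𝔉.E (hPB.s_eq t).symm)
      (cast (congrArg 𝔉.E (hPB.r_eq t')) (β.act t' e₀))
      = cast (congrArg 𝔉.E h.symm) (β.act t' e₀) :=
    eq_of_heq (((cast_heq _ _).trans (cast_heq _ _)).trans (cast_heq _ _).symm)
  have hm' : β.act t (cast (congrArg 𝔉.E h.symm) (β.act t' e₀))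
      = cast (congrArg 𝔉.E (PB.r_mul t t' h))
          (β.act (PB.mul t t') (cast (congrArg 𝔉.E (PB.s_mul t t' h).symm) e₀)) := by
    rw [hm, cast_cast, aux_cast_self]
  show cast (congrArg 𝔉.E (hPB.r_eq t))
      (β.act t (cast (congrArg 𝔉.E (hPB.s_eq t).symm)
        (cast (congrArg 𝔉.E (hPB.r_eq t')) (β.act t' e₀)))) = Amap hPB β u' e
  rw [inner, hm']
  refine eq_of_heq (((cast_heq _ _).trans (cast_heq _ _)).trans ?_)
  refine HEq.trans ?_ (cast_heq _ _).symm
  exact aux_act_congr β hu (((cast_heq _ _).trans (cast_heq _ _)).trans (cast_heq _ _).symm)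

theorem Amap_diag (y : Y) (pf1 : p y = 𝒢.r (𝒢.unit (p y)))
    (pf2 : 𝒢.s (𝒢.unit (p y)) = p y) (e : 𝔉.E y) :
    Amap hPB β ⟨(y, 𝒢.unit (p y), y), pf1, pf2⟩ e = e := by
  set t : PullbackCarrier 𝒢 p := ⟨(y, 𝒢.unit (p y), y), pf1, pf2⟩ with ht
  have htu : t = PB.unit y := Subtype.ext (hPB.unit_eq y).symm
  have hmul : PB.mul t t = t := by
    rw [htu]
    have := PB.mul_unit (PB.unit y)
    rwa [PB.s_unit] at this
  have hso : PB.s t = PB.r t := by rw [hPB.s_eq, hPB.r_eq]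
  show cast (congrArg 𝔉.E (hPB.r_eq t))
      (β.act t (cast (congrArg 𝔉.E (hPB.s_eq t).symm) e)) = e
  rw [aux_act_idem β hmul hso, cast_cast, cast_cast, aux_cast_self]

/-- Equivariance of `T` at `t`, in `Amap` form. -/
theorem aux_equiv_transfer {𝔈Y 𝔉Y : BanachSpaceFieldB.{u, v} Y}
    (αY : SpaceAction PB 𝔈Y) (βY : SpaceAction PB 𝔉Y)
    (T : ∀ y, 𝔈Y.E y →L[ℂ] 𝔉Y.E y) (t : PullbackCarrier 𝒢 p)
    (hTt : ∀ e, βY.act t (T (PB.s t) e) = T (PB.r t) (αY.act t e))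
    (e : 𝔈Y.E t.1.2.2) :
    Amap hPB βY t (T t.1.2.2 e) = T t.1.1 (Amap hPB αY t e) := by
  have h1 : cast (congrArg 𝔉Y.E (hPB.s_eq t).symm) (T t.1.2.2 e)
      = T (PB.s t) (cast (congrArg 𝔈Y.E (hPB.s_eq t).symm) e) :=
    aux_tr_comm (fun y => (T y : 𝔈Y.E y → 𝔉Y.E y)) (hPB.s_eq t).symm e
  have h2 : cast (congrArg 𝔉Y.E (hPB.r_eq t))
        (T (PB.r t) (αY.act t (cast (congrArg 𝔈Y.E (hPB.s_eq t).symm) e)))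
      = T t.1.1 (cast (congrArg 𝔈Y.E (hPB.r_eq t))
          (αY.act t (cast (congrArg 𝔈Y.E (hPB.s_eq t).symm) e))) :=
    aux_tr_comm (fun y => (T y : 𝔈Y.E y → 𝔉Y.E y)) (hPB.r_eq t) _
  show cast (congrArg 𝔉Y.E (hPB.r_eq t))
      (βY.act t (cast (congrArg 𝔉Y.E (hPB.s_eq t).symm) (T t.1.2.2 e)))
      = T t.1.1 (Amap hPB αY t e)
  rw [h1, hTt]
  exact h2

end AuxAmap

section AuxShriek

variable {G : Type u} {O : Type u} {Y : Type u}
variable [TopologicalSpace G] [TopologicalSpace O] [TopologicalSpace Y]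
variable {𝒢 : TopGroupoid G O} {p : Y → O}
variable {PB : TopGroupoid (PullbackCarrier 𝒢 p) Y}
variable {hPB : IsPullbackGroupoid 𝒢 p PB}
variable {𝔈Y : BanachSpaceFieldB.{u, v} Y} {αY : SpaceAction PB 𝔈Y}
variable {𝔈X : BanachSpaceFieldB.{u, v} O} {αX : SpaceAction 𝒢 𝔈X}
variable (shr : PShriekSpace PB hPB 𝔈Y αY 𝔈X αX)

theorem aux_comp_cast (x : O) (v : 𝔈X.E x) (y : Y) (hy : p y = x) :
    shr.comp x v y hy = shr.comp (p y) (cast (congrArg 𝔈X.E hy.symm) v) y rfl := by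
  subst hy; rfl

theorem aux_comp_sub (x : O) (v w : 𝔈X.E x) (y : Y) (hy : p y = x) :
    shr.comp x (v - w) y hy = shr.comp x v y hy - shr.comp x w y hy := by
  have h1 : v - w = v + (-1 : ℂ) • w := by
    rw [neg_one_smul, sub_eq_add_neg]
  rw [h1, shr.comp_add, shr.comp_smul, neg_one_smul, ← sub_eq_add_neg]

/-- Invariance of `comp` under the `Y ×_X Y`-action, in `Amap` form. -/
theorem aux_comp_invariant {z y : Y} (x : O) (hz : p z = x) (hy : p y = x)
    (v : 𝔈X.E x) :
    Amap hPB αY ⟨(z, 𝒢.unit (p z), y), (𝒢.r_unit (p z)).symm,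
        (𝒢.s_unit (p z)).trans (hz.trans hy.symm)⟩ (shr.comp x v y hy)
      = shr.comp x v z hz := by
  subst hz
  set t : PullbackCarrier 𝒢 p := ⟨(z, 𝒢.unit (p z), y), (𝒢.r_unit (p z)).symm,
      (𝒢.s_unit (p z)).trans hy.symm⟩ with ht
  set v' : 𝔈X.E (p y) := cast (congrArg 𝔈X.E hy.symm) v with hv'
  have h1 : shr.comp (p z) v y hy = shr.comp (p y) v' y rfl := aux_comp_cast shr _ v y hy
  have h2 := shr.comp_invariant t rfl v'
  have h2' : αY.act t (cast (congrArg 𝔈Y.E (hPB.s_eq t).symm) (shr.comp (p y) v' y rfl))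
      = cast (congrArg 𝔈Y.E (hPB.r_eq t).symm)
          (shr.comp (p y) v' z ((𝒢.s_unit (p z)).symm.trans
            ((congrArg 𝒢.s (congrArg (fun w => 𝒢.unit (p w)) rfl).symm).trans t.2.2))) := h2
  have h3 : shr.comp (p y) v' z (hy.symm) = shr.comp (p z) v z rfl := by
    rw [aux_comp_cast shr (p y) v' z hy.symm, hv', cast_cast, aux_cast_self]
  show cast (congrArg 𝔈Y.E (hPB.r_eq t))
      (αY.act t (cast (congrArg 𝔈Y.E (hPB.s_eq t).symm) (shr.comp (p z) v y hy)))
      = shr.comp (p z) v z rfl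
  rw [h1, h2', cast_cast, aux_cast_self, ← h3]

/-- `comp_surj` in `Amap` form. -/
theorem aux_comp_surj (x : O) (e : ∀ y : Y, p y = x → 𝔈Y.E y)
    (he : ∀ (t : PullbackCarrier 𝒢 p), t.1.2.1 = 𝒢.unit (p t.1.1) →
      ∀ (hz : p t.1.1 = x) (hy : p t.1.2.2 = x),
        Amap hPB αY t (e t.1.2.2 hy) = e t.1.1 hz) :
    ∃ v : 𝔈X.E x, ∀ y hy, shr.comp x v y hy = e y hy := by
  refine shr.comp_surj x e (fun t ht hz hy => ?_)
  rw [← he t ht hz hy]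
  show αY.act t _ = cast (congrArg 𝔈Y.E (hPB.r_eq t).symm)
      (cast (congrArg 𝔈Y.E (hPB.r_eq t)) (αY.act t _))
  rw [cast_cast, aux_cast_self]

/-- Injectivity of `v ↦ comp x v y hy` for a single `y` in the fibre. -/
theorem aux_comp_inj_one (x : O) (y : Y) (hy : p y = x) (v w : 𝔈X.E x)
    (h : shr.comp x v y hy = shr.comp x w y hy) : v = w := by
  refine shr.comp_inj x v w (fun z hz => ?_)
  rw [← aux_comp_invariant shr x hz hy v, ← aux_comp_invariant shr x hz hy w, h]

/-- `act_comp` in `Amap` form. -/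
theorem aux_act_comp (γ : G) (v : 𝔈X.E (𝒢.s γ)) (z y : Y) (hz : p z = 𝒢.r γ)
    (hy : p y = 𝒢.s γ) :
    shr.comp (𝒢.r γ) (αX.act γ v) z hz
      = Amap hPB αY ⟨(z, γ, y), hz, hy.symm⟩ (shr.comp (𝒢.s γ) v y hy) :=
  shr.act_comp γ v z y hz hy

/-- Surjectivity of `v ↦ comp x v y hy` for a single `y` in the fibre. -/
theorem aux_comp_surj_one (x : O) (y : Y) (hy : p y = x) (e : 𝔈Y.E y) :
    ∃ v : 𝔈X.E x, shr.comp x v y hy = e := by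
  subst hy
  have hex : ∃ v : 𝔈X.E (p y), ∀ z hz, shr.comp (p y) v z hz
      = Amap hPB αY ⟨(z, 𝒢.unit (p y), y), hz.trans (𝒢.r_unit (p y)).symm,
          𝒢.s_unit (p y)⟩ e := by
    refine aux_comp_surj shr (p y) _ (fun t ht hz hy2 => ?_)
    obtain ⟨⟨a, g, b⟩, h1, h2⟩ := t
    simp only at ht hz hy2 ⊢
    subst ht
    have hmm : 𝒢.mul (𝒢.unit (p a)) (𝒢.unit (p y)) = 𝒢.unit (p y) := by
      rw [show 𝒢.unit (p a) = 𝒢.unit (p y) from congrArg 𝒢.unit hz]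
      have := 𝒢.mul_unit (𝒢.unit (p y))
      rwa [𝒢.s_unit] at this
    rw [Amap_mul hPB αY h1 h2 (hy2.trans (𝒢.r_unit (p y)).symm) (𝒢.s_unit (p y)) e]
    exact eq_of_heq (Amap_congr hPB αY
      (Subtype.ext (by simp only [hmm])) HEq.rfl)
  obtain ⟨v, hv⟩ := hex
  refine ⟨v, ?_⟩
  rw [hv y rfl]
  exact Amap_diag hPB αY y (rfl.trans (𝒢.r_unit (p y)).symm) (𝒢.s_unit (p y)) e

end AuxShriek

/-- **The functor `p_!` and its properties.**  Let `p : Y → X` be continuous, open and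
surjective between locally compact Hausdorff spaces, carrying a faithful continuous field of
measures, and let `𝒢` be a locally compact Hausdorff groupoid with open range and source
maps over `X`.  Then `p_!` (realised through `PShriekSpace` data) is a functor from the
`p*(𝒢)`-Banach spaces with bounded `Y ×_X Y`-equivariant continuous fields of linear maps to
the `𝒢`-Banach spaces with bounded continuous fields of linear maps; it is isometric on
morphisms, sends `p*(𝒢)`-equivariant fields to `𝒢`-equivariant fields, and it inverts `p*`
via the natural isometric isomorphisms `I : p*p_!E ≅ E` and `J : p_!p*E ≅ E`. -/
theorem pshriek_functor_inverts_pullback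
    [LocallyCompactSpace G] [T2Space G] [LocallyCompactSpace O] [T2Space O]
    [LocallyCompactSpace Y] [T2Space Y] [MeasurableSpace Y] [BorelSpace Y]
    (𝒢 : TopGroupoid G O) (h𝒢 : 𝒢.OpenMaps)
    (p : Y → O) (hp : Continuous p) (hpo : IsOpenMap p) (hps : Function.Surjective p)
    (m : ContFieldOfMeasures p) (hm : m.Faithful)
    (PB : TopGroupoid (PullbackCarrier 𝒢 p) Y) (hPB : IsPullbackGroupoid 𝒢 p PB) :
    -- (1) `p_!` on morphisms: existence, uniqueness, isometry, equivariance
    (∀ (𝔈Y : BanachSpaceFieldB.{u, v} Y) (αY : SpaceAction PB 𝔈Y)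
       (𝔈X : BanachSpaceFieldB.{u, v} O) (αX : SpaceAction 𝒢 𝔈X)
       (shrE : PShriekSpace PB hPB 𝔈Y αY 𝔈X αX)
       (𝔉Y : BanachSpaceFieldB.{u, v} Y) (βY : SpaceAction PB 𝔉Y)
       (𝔉X : BanachSpaceFieldB.{u, v} O) (βX : SpaceAction 𝒢 𝔉X)
       (shrF : PShriekSpace PB hPB 𝔉Y βY 𝔉X βX)
       (T : ∀ y, 𝔈Y.E y →L[ℂ] 𝔉Y.E y),
      IsLinField 𝔈Y 𝔉Y T → (∃ C, ∀ y, ‖T y‖ ≤ C) → IsYxYEquivariant αY βY T →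
      ∃ TX : ∀ x, 𝔈X.E x →L[ℂ] 𝔉X.E x,
        (∀ x v y hy, shrF.comp x (TX x v) y hy = T y (shrE.comp x v y hy)) ∧
        IsLinField 𝔈X 𝔉X TX ∧
        -- `‖p_! T‖ = ‖T‖`
        (∀ C : ℝ, 0 ≤ C → ((∀ y, ‖T y‖ ≤ C) ↔ ∀ x, ‖TX x‖ ≤ C)) ∧
        -- if `T` is `p*(𝒢)`-equivariant then `p_! T` is `𝒢`-equivariant
        ((∀ (t : PullbackCarrier 𝒢 p) e,
            βY.act t (T (PB.s t) e) = T (PB.r t) (αY.act t e)) →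
          IsEquivariantField αX βX TX) ∧
        -- uniqueness (so that `p_!` is functorial: identities and compositions are
        -- sent to identities and compositions)
        (∀ TX' : ∀ x, 𝔈X.E x →L[ℂ] 𝔉X.E x,
          (∀ x v y hy, shrF.comp x (TX' x v) y hy = T y (shrE.comp x v y hy)) →
          TX' = TX)) ∧
    -- (2) `I : p* p_! E ≅ E`, a natural `p*(𝒢)`-equivariant isometric isomorphism
    (∀ (𝔈Y : BanachSpaceFieldB.{u, v} Y) (αY : SpaceAction PB 𝔈Y)
       (𝔈X : BanachSpaceFieldB.{u, v} O) (αX : SpaceAction 𝒢 𝔈X)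
       (shrE : PShriekSpace PB hPB 𝔈Y αY 𝔈X αX),
      (∀ y, Function.Bijective (fun v : 𝔈X.E (p y) => shrE.comp (p y) v y rfl)) ∧
      (∀ ξ : ∀ y, 𝔈X.E (p y), ξ ∈ pbSec p 𝔈X.E 𝔈X.F.Γ ↔
        ((fun y => shrE.comp (p y) (ξ y) y rfl) ∈ 𝔈Y.F.Γ))) ∧
    -- (3) `J : p_! p* E ≅ E`, a natural `𝒢`-equivariant isometric isomorphism
    (∀ (𝔈 : BanachSpaceFieldB.{u, v} O) (αE : SpaceAction 𝒢 𝔈)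
       (𝔈Y : BanachSpaceFieldB.{u, v} Y) (αY : SpaceAction PB 𝔈Y)
       (pd : SpacePullbackData PB hPB 𝔈 αE 𝔈Y αY)
       (𝔈X' : BanachSpaceFieldB.{u, v} O) (αX' : SpaceAction 𝒢 𝔈X')
       (shr' : PShriekSpace PB hPB 𝔈Y αY 𝔈X' αX'),
      ∃ J : ∀ x, 𝔈X'.E x ≃ₗᵢ[ℂ] 𝔈.E x,
        (∀ (x) (v : 𝔈X'.E x) (y) (hy : p y = x),
          cast (congrArg 𝔈.E hy) ((pd.eEq y).symm (shr'.comp x v y hy)) = J x v) ∧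
        (∀ ζ : ∀ x, 𝔈X'.E x, ζ ∈ 𝔈X'.F.Γ ↔ ((fun x => J x (ζ x)) ∈ 𝔈.F.Γ)) ∧
        (∀ γ v, J (𝒢.r γ) (αX'.act γ v) = αE.act γ (J (𝒢.s γ) v))) := by
  refine ⟨?_, ?_, ?_⟩
  · -- Part (1): the functor `p_!` on morphisms
    intro 𝔈Y αY 𝔈X αX shrE 𝔉Y βY 𝔉X βX shrF T hLin hBdd hYE
    obtain ⟨C, hC⟩ := hBdd
    have hC0' : (0:ℝ) ≤ max C 0 := le_max_right _ _
    have exW : ∀ (x : O) (v : 𝔈X.E x), ∃ w : 𝔉X.E x, ∀ y hy,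
        shrF.comp x w y hy = T y (shrE.comp x v y hy) := by
      intro x v
      refine aux_comp_surj shrF x (fun y hy => T y (shrE.comp x v y hy))
        (fun t ht hz hy => ?_)
      obtain ⟨⟨a, g, b⟩, h1, h2⟩ := t
      simp only at ht hz hy ⊢
      subst ht
      rw [aux_equiv_transfer hPB αY βY T ⟨(a, 𝒢.unit (p a), b), h1, h2⟩
        (hYE ⟨(a, 𝒢.unit (p a), b), h1, h2⟩ rfl) (shrE.comp x v b hy)]
      congr 1
      exact aux_comp_invariant shrE x hz hy v
    choose W hW using exW
    have hWadd : ∀ x v w, W x (v + w) = W x v + W x w := fun x v w =>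
      shrF.comp_inj x _ _ (fun y hy => by
        rw [hW, shrE.comp_add, map_add, shrF.comp_add, hW, hW])
    have hWsmul : ∀ (x) (c : ℂ) (v), W x (c • v) = c • W x v := fun x c v =>
      shrF.comp_inj x _ _ (fun y hy => by
        rw [hW, shrE.comp_smul, map_smul, shrF.comp_smul, hW])
    have hWnorm : ∀ x v, ‖W x v‖ ≤ max C 0 * ‖v‖ := by
      intro x v
      obtain ⟨y, hy⟩ := hps x
      calc ‖W x v‖ = ‖shrF.comp x (W x v) y hy‖ := (shrF.comp_norm x _ y hy).symm
        _ = ‖T y (shrE.comp x v y hy)‖ := by rw [hW]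
        _ ≤ ‖T y‖ * ‖shrE.comp x v y hy‖ := (T y).le_opNorm _
        _ ≤ max C 0 * ‖v‖ := by
            rw [shrE.comp_norm]
            exact mul_le_mul_of_nonneg_right (le_max_of_le_left (hC y)) (norm_nonneg v)
    let TX : ∀ x, 𝔈X.E x →L[ℂ] 𝔉X.E x := fun x =>
      LinearMap.mkContinuous
        { toFun := W x, map_add' := hWadd x, map_smul' := fun c v => hWsmul x c v }
        (max C 0) (hWnorm x)
    have hdef : ∀ x v y hy, shrF.comp x (TX x v) y hy = T y (shrE.comp x v y hy) := hW
    refine ⟨TX, hdef, ⟨?_, ?_⟩, ?_, ?_, ?_⟩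
    · -- maps sections to sections
      intro ζ hζ
      obtain ⟨δ, hδΓ, hδ⟩ := (shrE.sections ζ).mp hζ
      refine (shrF.sections _).mpr ⟨fun y => T y (δ y), hLin.maps_sections δ hδΓ,
        fun y => ?_⟩
      rw [hdef, hδ]
    · -- locally bounded
      intro x₀
      exact ⟨Set.univ, Filter.univ_mem, max C 0,
        fun x _ => LinearMap.mkContinuous_norm_le _ hC0' _⟩
    · -- isometry on morphisms
      intro C0 hC00
      constructor
      · intro hTY x
        refine ContinuousLinearMap.opNorm_le_bound _ hC00 (fun v => ?_)
        obtain ⟨y, hy⟩ := hps x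
        calc ‖TX x v‖ = ‖shrF.comp x (TX x v) y hy‖ := (shrF.comp_norm x _ y hy).symm
          _ = ‖T y (shrE.comp x v y hy)‖ := by rw [hdef]
          _ ≤ ‖T y‖ * ‖v‖ := by
              rw [← shrE.comp_norm x v y hy]; exact (T y).le_opNorm _
          _ ≤ C0 * ‖v‖ := mul_le_mul_of_nonneg_right (hTY y) (norm_nonneg v)
      · intro hTXb y
        refine ContinuousLinearMap.opNorm_le_bound _ hC00 (fun e => ?_)
        obtain ⟨v, hv⟩ := aux_comp_surj_one shrE (p y) y rfl e
        calc ‖T y e‖ = ‖T y (shrE.comp (p y) v y rfl)‖ := by rw [hv]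
          _ = ‖shrF.comp (p y) (TX (p y) v) y rfl‖ := by rw [hdef]
          _ = ‖TX (p y) v‖ := shrF.comp_norm _ _ _ _
          _ ≤ C0 * ‖v‖ := le_trans ((TX _).le_opNorm v)
              (mul_le_mul_of_nonneg_right (hTXb _) (norm_nonneg v))
          _ = C0 * ‖e‖ := by rw [← hv, shrE.comp_norm]
    · -- equivariance
      intro hfull γ e
      obtain ⟨z, hz⟩ := hps (𝒢.r γ)
      obtain ⟨y, hy⟩ := hps (𝒢.s γ)
      refine aux_comp_inj_one shrF (𝒢.r γ) z hz _ _ ?_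
      rw [aux_act_comp shrF γ (TX (𝒢.s γ) e) z y hz hy, hdef,
        aux_equiv_transfer hPB αY βY T ⟨(z, γ, y), hz, hy.symm⟩
          (hfull ⟨(z, γ, y), hz, hy.symm⟩) (shrE.comp (𝒢.s γ) e y hy),
        ← aux_act_comp shrE γ e z y hz hy, hdef]
    · -- uniqueness
      intro TX' hTX'
      funext x
      refine ContinuousLinearMap.ext (fun v => ?_)
      obtain ⟨y, hy⟩ := hps x
      exact aux_comp_inj_one shrF x y hy _ _ (by rw [hTX', hdef])
  · -- Part (2): `I : p* p_! E ≅ E`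
    intro 𝔈Y αY 𝔈X αX shrE
    constructor
    · intro y
      constructor
      · intro v w h
        exact aux_comp_inj_one shrE (p y) y rfl v w h
      · intro e
        exact aux_comp_surj_one shrE (p y) y rfl e
    · intro ξ
      constructor
      · intro hξ
        refine 𝔈Y.F.locally_approx_mem _ (fun y₀ ε hε => ?_)
        obtain ⟨γX, hγΓ, V, hV, happ⟩ := hξ y₀ ε hε
        obtain ⟨δ, hδΓ, hδ⟩ := (shrE.sections γX).mp hγΓ
        refine ⟨δ, hδΓ, V, hV, fun y hyV => ?_⟩
        have hd : shrE.comp (p y) (ξ y) y rfl - δ y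
            = shrE.comp (p y) (ξ y - γX (p y)) y rfl := by
          rw [aux_comp_sub, hδ y]
        rw [hd, shrE.comp_norm]
        exact happ y hyV
      · intro hη y₀ ε hε
        obtain ⟨γX, hγΓ, hγ⟩ := 𝔈X.F.dense_eval (p y₀) (ξ y₀) ε hε
        obtain ⟨δ, hδΓ, hδ⟩ := (shrE.sections γX).mp hγΓ
        have hgΓ : (fun y => shrE.comp (p y) (ξ y) y rfl + (-1:ℂ) • δ y) ∈ 𝔈Y.F.Γ :=
          𝔈Y.F.add_mem hη (𝔈Y.F.smul_mem (-1) hδΓ)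
        have hval : ∀ y, ‖shrE.comp (p y) (ξ y) y rfl + (-1:ℂ) • δ y‖
            = ‖ξ y - γX (p y)‖ := by
          intro y
          rw [neg_one_smul, ← sub_eq_add_neg, ← hδ y, ← aux_comp_sub, shrE.comp_norm]
        have h0 : ‖shrE.comp (p y₀) (ξ y₀) y₀ rfl + (-1:ℂ) • δ y₀‖ < ε := by
          rw [hval y₀, norm_sub_rev]
          exact hγ
        have hnb := 𝔈Y.F.usc_norm _ hgΓ y₀ ε h0
        refine ⟨γX, hγΓ,
          {y | ‖shrE.comp (p y) (ξ y) y rfl + (-1:ℂ) • δ y‖ < ε}, hnb,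
          fun y hyV => ?_⟩
        rw [← hval y]
        exact le_of_lt hyV
  · -- Part (3): `J : p_! p* E ≅ E`
    intro 𝔈 αE 𝔈Y αY pd 𝔈X' αX' shr'
    have hmulu : ∀ a : O, 𝒢.mul (𝒢.unit a) (𝒢.unit a) = 𝒢.unit a := by
      intro a
      have := 𝒢.mul_unit (𝒢.unit a)
      rwa [𝒢.s_unit] at this
    -- well-definedness of `J`
    have key : ∀ (x : O) (v : 𝔈X'.E x) (y y' : Y) (hy : p y = x) (hy' : p y' = x),
        cast (congrArg 𝔈.E hy') ((pd.eEq y').symm (shr'.comp x v y' hy'))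
          = cast (congrArg 𝔈.E hy) ((pd.eEq y).symm (shr'.comp x v y hy)) := by
      intro x v y y' hy hy'
      have hcomp : shr'.comp x v y' hy'
          = Amap hPB αY ⟨(y', 𝒢.unit (p y'), y), (𝒢.r_unit (p y')).symm,
              (𝒢.s_unit (p y')).trans (hy'.trans hy.symm)⟩ (shr'.comp x v y hy) :=
        (aux_comp_invariant shr' x hy' hy v).symm
      set e : 𝔈.E (𝒢.s (𝒢.unit (p y'))) :=
        cast (congrArg 𝔈.E ((𝒢.s_unit (p y')).trans (hy'.trans hy.symm)).symm)
          ((pd.eEq y).symm (shr'.comp x v y hy)) with he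
      have heq1 : pd.eEq y
          (cast (congrArg 𝔈.E ((𝒢.s_unit (p y')).trans (hy'.trans hy.symm))) e)
          = shr'.comp x v y hy := by
        rw [he, cast_cast, aux_cast_self, LinearIsometryEquiv.apply_symm_apply]
      have hequiv : αY.act ⟨(y', 𝒢.unit (p y'), y), (𝒢.r_unit (p y')).symm,
            (𝒢.s_unit (p y')).trans (hy'.trans hy.symm)⟩
            (cast (congrArg 𝔈Y.E (hPB.s_eq ⟨(y', 𝒢.unit (p y'), y),
                (𝒢.r_unit (p y')).symm,
                (𝒢.s_unit (p y')).trans (hy'.trans hy.symm)⟩).symm)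
              (pd.eEq y (cast (congrArg 𝔈.E
                ((𝒢.s_unit (p y')).trans (hy'.trans hy.symm))) e)))
          = cast (congrArg 𝔈Y.E (hPB.r_eq ⟨(y', 𝒢.unit (p y'), y),
                (𝒢.r_unit (p y')).symm,
                (𝒢.s_unit (p y')).trans (hy'.trans hy.symm)⟩).symm)
              (pd.eEq y' (cast (congrArg 𝔈.E (𝒢.r_unit (p y')))
                (αE.act (𝒢.unit (p y')) e))) :=
        pd.equivariant ⟨(y', 𝒢.unit (p y'), y), (𝒢.r_unit (p y')).symm,
          (𝒢.s_unit (p y')).trans (hy'.trans hy.symm)⟩ e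
      have hA : Amap hPB αY ⟨(y', 𝒢.unit (p y'), y), (𝒢.r_unit (p y')).symm,
            (𝒢.s_unit (p y')).trans (hy'.trans hy.symm)⟩ (shr'.comp x v y hy)
          = pd.eEq y' (cast (congrArg 𝔈.E (𝒢.r_unit (p y')))
              (αE.act (𝒢.unit (p y')) e)) := by
        show cast _ (αY.act _ (cast _ (shr'.comp x v y hy))) = _
        rw [← heq1, hequiv, cast_cast, aux_cast_self]
      have hidem := aux_act_idem αE (hmulu (p y'))
        ((𝒢.s_unit (p y')).trans (𝒢.r_unit (p y')).symm) e
      rw [hcomp, hA, hidem, LinearIsometryEquiv.symm_apply_apply, he]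
      exact eq_of_heq ((((cast_heq _ _).trans (cast_heq _ _)).trans
        ((cast_heq _ _).trans (cast_heq _ _))).trans (cast_heq _ _).symm)
    choose y₀ hy₀ using hps
    let Jf : ∀ x, 𝔈X'.E x → 𝔈.E x := fun x v =>
      cast (congrArg 𝔈.E (hy₀ x)) ((pd.eEq (y₀ x)).symm (shr'.comp x v (y₀ x) (hy₀ x)))
    have hwd : ∀ (x) (v : 𝔈X'.E x) (y) (hy : p y = x),
        cast (congrArg 𝔈.E hy) ((pd.eEq y).symm (shr'.comp x v y hy)) = Jf x v :=
      fun x v y hy => key x v (y₀ x) y (hy₀ x) hy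
    have hJadd : ∀ x u v, Jf x (u + v) = Jf x u + Jf x v := by
      intro x u v
      show cast (congrArg 𝔈.E (hy₀ x))
        ((pd.eEq (y₀ x)).symm (shr'.comp x (u + v) (y₀ x) (hy₀ x))) = _
      rw [shr'.comp_add, map_add, aux_tr_add (hy₀ x)]
    have hJsmul : ∀ (x) (c : ℂ) (v), Jf x (c • v) = c • Jf x v := by
      intro x c v
      show cast (congrArg 𝔈.E (hy₀ x))
        ((pd.eEq (y₀ x)).symm (shr'.comp x (c • v) (y₀ x) (hy₀ x))) = _
      rw [shr'.comp_smul, map_smul, aux_tr_smul c (hy₀ x)]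
    have hJnorm : ∀ (x) (v : 𝔈X'.E x), ‖Jf x v‖ = ‖v‖ := by
      intro x v
      show ‖cast (congrArg 𝔈.E (hy₀ x))
        ((pd.eEq (y₀ x)).symm (shr'.comp x v (y₀ x) (hy₀ x)))‖ = _
      rw [aux_tr_norm (hy₀ x), LinearIsometryEquiv.norm_map, shr'.comp_norm]
    have hJbij : ∀ x, Function.Bijective (Jf x) := by
      intro x
      constructor
      · intro u v h
        have h1 : (pd.eEq (y₀ x)).symm (shr'.comp x u (y₀ x) (hy₀ x))
            = (pd.eEq (y₀ x)).symm (shr'.comp x v (y₀ x) (hy₀ x)) := by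
          have h2 := congrArg (cast (congrArg 𝔈.E (hy₀ x)).symm) h
          rwa [cast_cast, aux_cast_self, cast_cast, aux_cast_self] at h2
        exact aux_comp_inj_one shr' x (y₀ x) (hy₀ x) u v
          ((pd.eEq (y₀ x)).symm.injective h1)
      · intro f
        obtain ⟨v, hv⟩ := aux_comp_surj_one shr' x (y₀ x) (hy₀ x)
          (pd.eEq (y₀ x) (cast (congrArg 𝔈.E (hy₀ x).symm) f))
        refine ⟨v, ?_⟩
        show cast (congrArg 𝔈.E (hy₀ x))
          ((pd.eEq (y₀ x)).symm (shr'.comp x v (y₀ x) (hy₀ x))) = f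
        rw [hv, LinearIsometryEquiv.symm_apply_apply, cast_cast, aux_cast_self]
    let J : ∀ x, 𝔈X'.E x ≃ₗᵢ[ℂ] 𝔈.E x := fun x =>
      { LinearEquiv.ofBijective
          { toFun := Jf x, map_add' := hJadd x, map_smul' := fun c v => hJsmul x c v }
          (hJbij x) with
        norm_map' := hJnorm x }
    have hJf : ∀ (x) (v : 𝔈X'.E x), J x v = Jf x v := fun x v => rfl
    have hwd' : ∀ (x) (v : 𝔈X'.E x) (y) (hy : p y = x),
        cast (congrArg 𝔈.E hy) ((pd.eEq y).symm (shr'.comp x v y hy)) = J x v :=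
      hwd
    refine ⟨J, hwd', ?_, ?_⟩
    · -- sections
      intro ζ
      have hcJ : ∀ y, pd.eEq y (J (p y) (ζ (p y)))
          = shr'.comp (p y) (ζ (p y)) y rfl := by
        intro y
        rw [← hwd' (p y) (ζ (p y)) y rfl, aux_cast_self,
          LinearIsometryEquiv.apply_symm_apply]
      constructor
      · intro hζ
        obtain ⟨δ, hδΓ, hδeq⟩ := (shr'.sections ζ).mp hζ
        have hpb : (fun y => J (p y) (ζ (p y))) ∈ pbSec p 𝔈.E 𝔈.F.Γ := by
          refine (pd.sections _).mpr ?_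
          have hfe : (fun y => pd.eEq y (J (p y) (ζ (p y)))) = δ :=
            funext (fun y => (hcJ y).trans (hδeq y))
          rw [hfe]; exact hδΓ
        refine 𝔈.F.locally_approx_mem _ (fun x₀ ε hε => ?_)
        obtain ⟨γs, hγΓ, V, hV, happ⟩ := hpb (y₀ x₀) ε hε
        obtain ⟨W0, hW0V, hW0open, hyW0⟩ := mem_nhds_iff.mp hV
        refine ⟨γs, hγΓ, p '' W0,
          (hpo W0 hW0open).mem_nhds ⟨y₀ x₀, hyW0, hy₀ x₀⟩, ?_⟩
        rintro x ⟨y, hyW, rfl⟩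
        exact happ y (hW0V hyW)
      · intro hJΓ
        have hpb : (fun y => J (p y) (ζ (p y))) ∈ pbSec p 𝔈.E 𝔈.F.Γ := by
          intro y₀' ε hε
          refine ⟨fun x => J x (ζ x), hJΓ, Set.univ, Filter.univ_mem, fun y _ => ?_⟩
          simp only [sub_self, norm_zero]
          exact le_of_lt hε
        have h2 := (pd.sections _).mp hpb
        refine (shr'.sections ζ).mpr
          ⟨fun y => shr'.comp (p y) (ζ (p y)) y rfl, ?_, fun y => rfl⟩
        have hfe : (fun y => pd.eEq y (J (p y) (ζ (p y))))
            = fun y => shr'.comp (p y) (ζ (p y)) y rfl := funext hcJ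
        rw [← hfe]; exact h2
    · -- equivariance
      intro γ v
      obtain ⟨z, hz⟩ : ∃ z, p z = 𝒢.r γ := ⟨y₀ (𝒢.r γ), hy₀ (𝒢.r γ)⟩
      obtain ⟨y, hy⟩ : ∃ y, p y = 𝒢.s γ := ⟨y₀ (𝒢.s γ), hy₀ (𝒢.s γ)⟩
      set e : 𝔈.E (𝒢.s γ) :=
        cast (congrArg 𝔈.E hy) ((pd.eEq y).symm (shr'.comp (𝒢.s γ) v y hy)) with he
      have hJs : J (𝒢.s γ) v = e := (hwd' (𝒢.s γ) v y hy).symm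
      have heq1 : pd.eEq y (cast (congrArg 𝔈.E hy.symm) e)
          = shr'.comp (𝒢.s γ) v y hy := by
        rw [he, cast_cast, aux_cast_self, LinearIsometryEquiv.apply_symm_apply]
      have hequiv : αY.act ⟨(z, γ, y), hz, hy.symm⟩
            (cast (congrArg 𝔈Y.E (hPB.s_eq ⟨(z, γ, y), hz, hy.symm⟩).symm)
              (pd.eEq y (cast (congrArg 𝔈.E hy.symm) e)))
          = cast (congrArg 𝔈Y.E (hPB.r_eq ⟨(z, γ, y), hz, hy.symm⟩).symm)
              (pd.eEq z (cast (congrArg 𝔈.E hz.symm) (αE.act γ e))) :=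
        pd.equivariant ⟨(z, γ, y), hz, hy.symm⟩ e
      have hA : Amap hPB αY ⟨(z, γ, y), hz, hy.symm⟩ (shr'.comp (𝒢.s γ) v y hy)
          = pd.eEq z (cast (congrArg 𝔈.E hz.symm) (αE.act γ e)) := by
        show cast _ (αY.act _ (cast _ (shr'.comp (𝒢.s γ) v y hy))) = _
        rw [← heq1, hequiv, cast_cast, aux_cast_self]
      have hfinal : J (𝒢.r γ) (αX'.act γ v)
          = cast (congrArg 𝔈.E hz)
              ((pd.eEq z).symm (shr'.comp (𝒢.r γ) (αX'.act γ v) z hz)) :=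
        (hwd' _ _ z hz).symm
      rw [hfinal, aux_act_comp shr' γ v z y hz hy, hA,
        LinearIsometryEquiv.symm_apply_apply, cast_cast, aux_cast_self, hJs]

end Statement12
end
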